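/- arXiv:1101.4491 — 9 statements merged into one kernel-verified Lean document; each statement's English description precedes it below -/
import Mathlib

section
/- Let T = (V,A) be a tournament and C a maximal collection of pairwise arc-disjoint directed triangles. Then there exists a linear ordering σ of V such that every backward arc vu of σ has both endpoints u,v in V(C). -/
/-!
By maximality, every directed triangle shares an arc with some triangle of `C`, hence has
an arc with both ends covered by `C`. So if `x` is uncovered, `x → u → v` and one of `u, v`
is uncovered, then `v → x` is impossible: `x → v`.
Consequently, along any arc `a → b` with an uncovered end, the uncovered in-neighbourhood
of `a`, even with `a` itself added, is contained in that of `b`, and the potential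
`#N⁻(v) + #N⁻[v]` (uncovered open and closed in-neighbourhoods) strictly increases.
Sorting the vertices by this potential makes every such arc a forward arc.
-/

variable {V : Type*} [DecidableEq V]

def IsTournament (A : V → V → Prop) : Prop :=
  (∀ u, ¬ A u u) ∧ ∀ u v : V, u ≠ v → (A u v ↔ ¬ A v u)

def triArcs (t : V × V × V) : Finset (V × V) :=
  {(t.1, t.2.1), (t.2.1, t.2.2), (t.2.2, t.1)}

def triVerts (t : V × V × V) : Finset V :=
  {t.1, t.2.1, t.2.2}

open Finset Function

theorem Function.exists_injective_nat_lt_of_lt {α : Type*} [Fintype α] (f : α → ℕ) :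
    ∃ σ : α → ℕ, Injective σ ∧ ∀ a b, f a < f b → σ a < σ b := by
  set n := Fintype.card α
  let e := Fintype.equivFin α
  have he : ∀ a, (e a : ℕ) < n := fun a => (e a).2
  refine ⟨fun a => e a + n * f a, fun a b hab => e.injective (Fin.ext ?_), fun a b hlt => ?_⟩
  · have := congrArg (· % n) hab
    simpa only [Nat.add_mul_mod_self_left, Nat.mod_eq_of_lt (he a), Nat.mod_eq_of_lt (he b)]
      using this
  · calc (e a : ℕ) + n * f a < n * (f a + 1) := by linarith [he a]
      _ ≤ n * f b := Nat.mul_le_mul_left n hlt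
      _ ≤ e b + n * f b := Nat.le_add_left _ _

theorem IsTournament.not_arc_of_arc {α : Type*} {A : α → α → Prop} (hA : IsTournament A)
    {u v : α} (huv : A u v) : ¬ A v u := by
  have hne : u ≠ v := by rintro rfl; exact hA.1 u huv
  exact (hA.2 u v hne).1 huv

theorem IsTournament.arc_of_not_arc {α : Type*} {A : α → α → Prop} (hA : IsTournament A)
    {u v : α} (hne : u ≠ v) (huv : ¬ A u v) : A v u := by
  by_contra hvu
  exact huv ((hA.2 u v hne).2 hvu)

theorem mem_triVerts_of_mem_triArcs {t : V × V × V} {p : V × V} (hp : p ∈ triArcs t) :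
    p.1 ∈ triVerts t ∧ p.2 ∈ triVerts t := by
  simp only [triArcs, mem_insert, mem_singleton] at hp
  rcases hp with rfl | rfl | rfl <;> simp [triVerts]

theorem disjoint_triArcs_of_forall_notMem_biUnion {C : Finset (V × V × V)} {s : V × V × V}
    (hs : ∀ p ∈ triArcs s, p.1 ∉ C.biUnion triVerts ∨ p.2 ∉ C.biUnion triVerts) :
    ∀ t ∈ C, Disjoint (triArcs s) (triArcs t) := by
  intro t ht
  rw [disjoint_left]
  intro p hps hpt
  have hcov := mem_triVerts_of_mem_triArcs hpt
  rcases hs p hps with h | h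
  · exact h (mem_biUnion.2 ⟨t, ht, hcov.1⟩)
  · exact h (mem_biUnion.2 ⟨t, ht, hcov.2⟩)

section MaximalPacking

variable {A : V → V → Prop} {C : Finset (V × V × V)}

variable (A C) in
def MeetsAllTriangles : Prop :=
  ∀ u v w : V, A u v → A v w → A w u →
    ∃ t ∈ C, ¬ Disjoint (triArcs (u, v, w)) (triArcs t)

theorem MeetsAllTriangles.arc_trans (hmax : MeetsAllTriangles A C) (hA : IsTournament A)
    {x u v : V} (hx : x ∉ C.biUnion triVerts)
    (huv : u ∉ C.biUnion triVerts ∨ v ∉ C.biUnion triVerts) (hxu : A x u) (hu : A u v) :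
    A x v := by
  by_cases hxv : x = v
  · subst hxv
    exact absurd hxu (hA.not_arc_of_arc hu)
  by_contra hnxv
  obtain ⟨t, ht, hnd⟩ := hmax u v x hu (hA.arc_of_not_arc hxv hnxv) hxu
  refine hnd (disjoint_triArcs_of_forall_notMem_biUnion (fun p hp => ?_) t ht)
  simp only [triArcs, mem_insert, mem_singleton] at hp
  rcases hp with rfl | rfl | rfl
  · exact huv
  · exact Or.inr hx
  · exact Or.inl hx

variable [Fintype V] [DecidableRel A]

variable (A C) in
def uncoveredInNbhd (v : V) : Finset V :=
  univ.filter fun x => x ∉ C.biUnion triVerts ∧ A x v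

variable (A C) in
def uncoveredClosedInNbhd (v : V) : Finset V :=
  univ.filter fun x => x ∉ C.biUnion triVerts ∧ (A x v ∨ x = v)

variable (A C) in
def packingPotential (v : V) : ℕ :=
  #(uncoveredInNbhd A C v) + #(uncoveredClosedInNbhd A C v)

theorem uncoveredInNbhd_subset_closed (v : V) :
    uncoveredInNbhd A C v ⊆ uncoveredClosedInNbhd A C v :=
  monotone_filter_right _ fun _ _ => And.imp_right Or.inl

theorem card_uncoveredInNbhd_lt_closed (hA : IsTournament A) {v : V}
    (hv : v ∉ C.biUnion triVerts) :
    #(uncoveredInNbhd A C v) < #(uncoveredClosedInNbhd A C v) := by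
  refine card_lt_card ((ssubset_iff_of_subset (uncoveredInNbhd_subset_closed v)).2 ⟨v, ?_, ?_⟩)
  · simpa [uncoveredClosedInNbhd] using hv
  · simp [uncoveredInNbhd, hA.1 v]

theorem MeetsAllTriangles.uncoveredClosedInNbhd_subset (hmax : MeetsAllTriangles A C)
    (hA : IsTournament A)
    {a b : V} (hab : A a b) (hcov : a ∉ C.biUnion triVerts ∨ b ∉ C.biUnion triVerts) :
    uncoveredClosedInNbhd A C a ⊆ uncoveredInNbhd A C b := by
  intro x hx
  simp only [uncoveredClosedInNbhd, uncoveredInNbhd, mem_filter, mem_univ, true_and] at hx ⊢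
  obtain ⟨hxC, hxa | rfl⟩ := hx
  · exact ⟨hxC, hmax.arc_trans hA hxC hcov hxa hab⟩
  · exact ⟨hxC, hab⟩

theorem MeetsAllTriangles.packingPotential_lt (hmax : MeetsAllTriangles A C)
    (hA : IsTournament A)
    {a b : V} (hab : A a b) (hcov : a ∉ C.biUnion triVerts ∨ b ∉ C.biUnion triVerts) :
    packingPotential A C a < packingPotential A C b := by
  have hmid := card_le_card (hmax.uncoveredClosedInNbhd_subset hA hab hcov)
  have ha := card_le_card (uncoveredInNbhd_subset_closed (A := A) (C := C) a)
  have hb := card_le_card (uncoveredInNbhd_subset_closed (A := A) (C := C) b)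
  unfold packingPotential
  rcases hcov with ha' | hb'
  · have := card_uncoveredInNbhd_lt_closed hA ha'
    omega
  · have := card_uncoveredInNbhd_lt_closed hA hb'
    omega

end MaximalPacking

theorem maximal_packing_nice_ordering_general [Fintype V] (A : V → V → Prop)
    (hA : IsTournament A) (C : Finset (V × V × V))
    (hmax : ∀ u v w : V, A u v → A v w → A w u →
      ∃ t ∈ C, ¬ Disjoint (triArcs (u, v, w)) (triArcs t)) :
    ∃ σ : V → ℕ, Function.Injective σ ∧
      ∀ u v : V, σ u < σ v → A v u →
        u ∈ C.biUnion triVerts ∧ v ∈ C.biUnion triVerts := by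
  classical
  obtain ⟨σ, hσ, hlt⟩ := exists_injective_nat_lt_of_lt (packingPotential A C)
  refine ⟨σ, hσ, fun u v huv hvu => ?_⟩
  by_contra hcov
  rw [not_and_or] at hcov
  exact (hlt v u (MeetsAllTriangles.packingPotential_lt hmax hA hvu hcov.symm)).asymm huv

/-- Let `C` be a maximal collection of pairwise arc-disjoint directed
triangles of a tournament `T`. Then there is a linear ordering `σ` of the
vertices such that every backward arc `v → u` (with `σ u < σ v`) has both
endpoints in `V(C)`. -/
theorem maximal_packing_nice_ordering [Fintype V] (A : V → V → Prop)
    (hA : IsTournament A) (C : Finset (V × V × V))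
    (hCt : ∀ t ∈ C, A t.1 t.2.1 ∧ A t.2.1 t.2.2 ∧ A t.2.2 t.1)
    (hCd : ∀ t ∈ C, ∀ t' ∈ C, t ≠ t' → Disjoint (triArcs t) (triArcs t'))
    (hmax : ∀ u v w : V, A u v → A v w → A w u →
      ∃ t ∈ C, ¬ Disjoint (triArcs (u, v, w)) (triArcs t)) :
    ∃ σ : V → ℕ, Function.Injective σ ∧
      ∀ u v : V, σ u < σ v → A v u →
        u ∈ C.biUnion triVerts ∧ v ∈ C.biUnion triVerts :=
  maximal_packing_nice_ordering_general A hA C hmax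
end

section
/- Let B = (I ∪ G, E) be a bipartite graph with minimum vertex cover D, and set D1 = D ∩ I, D2 = D ∩ G. Let I' ⊆ D1. Then every subset I'' ⊆ I' satisfies |I''| ≤ |N(I'') ∩ (G \ D2)| , and consequently I' can be matched into G \ D2. -/
/-- Let `B = (I ∪ G, E)` be a bipartite graph with minimum vertex cover
`D = D1 ∪ D2` (`D1 ⊆ I`, `D2 ⊆ G`), and let `I' ⊆ D1`. Then every subset
`I'' ⊆ I'` satisfies `|I''| ≤ |N(I'') ∩ (G \ D2)|`, and consequently `I'`
can be matched into `G \ D2`. -/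
theorem min_cover_hall_matching {I G : Type*} [Fintype I] [Fintype G]
    [DecidableEq I] [DecidableEq G] (E : I → G → Prop)
    [∀ i g, Decidable (E i g)]
    (D1 : Finset I) (D2 : Finset G)
    (hcov : ∀ i g, E i g → i ∈ D1 ∨ g ∈ D2)
    (hmin : ∀ (D1' : Finset I) (D2' : Finset G),
      (∀ i g, E i g → i ∈ D1' ∨ g ∈ D2') → D1.card + D2.card ≤ D1'.card + D2'.card)
    (I' : Finset I) (hI' : I' ⊆ D1) :
    (∀ I'' ⊆ I',
      I''.card ≤ (Finset.univ.filter (fun g : G => g ∉ D2 ∧ ∃ i ∈ I'', E i g)).card) ∧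
    ∃ f : {i // i ∈ I'} → G, Function.Injective f ∧
      ∀ i : {i // i ∈ I'}, E i.1 (f i) ∧ f i ∉ D2 := by
  have hall : ∀ I'' ⊆ I',
      I''.card ≤ (Finset.univ.filter (fun g : G => g ∉ D2 ∧ ∃ i ∈ I'', E i g)).card := by
    intro I'' hsub
    by_contra hlt
    push_neg at hlt
    set N := Finset.univ.filter (fun g : G => g ∉ D2 ∧ ∃ i ∈ I'', E i g) with hN
    have hcov' : ∀ i g, E i g → i ∈ D1 \ I'' ∨ g ∈ D2 ∪ N := by
      intro i g hig
      by_cases hi : i ∈ I''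
      · right
        by_cases hg : g ∈ D2
        · exact Finset.mem_union_left _ hg
        · exact Finset.mem_union_right _ (by
            simp only [hN, Finset.mem_filter, Finset.mem_univ, true_and]
            exact ⟨hg, i, hi, hig⟩)
      · rcases hcov i g hig with h | h
        · exact Or.inl (Finset.mem_sdiff.mpr ⟨h, hi⟩)
        · exact Or.inr (Finset.mem_union_left _ h)
    have hle := hmin _ _ hcov'
    have h1 : (D1 \ I'').card = D1.card - I''.card :=
      Finset.card_sdiff_of_subset (hsub.trans hI')
    have h2 : (D2 ∪ N).card ≤ D2.card + N.card := Finset.card_union_le _ _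
    have hI''le : I''.card ≤ D1.card := Finset.card_le_card (hsub.trans hI')
    omega
  refine ⟨hall, ?_⟩
  have := (Finset.all_card_le_biUnion_card_iff_exists_injective
    (fun i : {i // i ∈ I'} =>
      Finset.univ.filter (fun g : G => g ∉ D2 ∧ E i.1 g))).mp ?_
  · obtain ⟨f, hinj, hf⟩ := this
    exact ⟨f, hinj, fun i => by
      have := hf i; simp only [Finset.mem_filter] at this; exact ⟨this.2.2, this.2.1⟩⟩
  · intro s
    have hkey := hall (s.image Subtype.val) (by
      intro x hx; simp only [Finset.mem_image] at hx
      obtain ⟨⟨y, hy⟩, _, rfl⟩ := hx; exact hy)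
    rw [Finset.card_image_of_injective _ Subtype.val_injective] at hkey
    refine hkey.trans (Finset.card_le_card ?_)
    intro g hg
    simp only [Finset.mem_filter, Finset.mem_univ, true_and, Finset.mem_image,
      Finset.mem_biUnion] at hg ⊢
    obtain ⟨hg2, i, ⟨⟨j, hjs, rfl⟩, hE⟩⟩ := hg
    exact ⟨j, hjs, by simp [hg2, hE]⟩
end

section
/- A dense set of rooted triplets R over a leaf set V is consistent (i.e., there is a rooted binary tree over V with which every triplet of R is consistent) if and only if R contains no conflict on four leaves. -/
/-!
Every set `T` of at least two leaves of a consistent instance splits, along the root of the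
tree restricted to `T`, into nonempty parts `A`, `B` with `aa'|b` and `bb'|a` for all
`a, a' ∈ A` and `b, b' ∈ B`; conversely, splits of all subsets assemble recursively into a tree.
So it suffices to produce splits from the four-point condition, adding one leaf `x` at a time:
for a split `(A, B)` and one pair `a₀ ∈ A`, `b₀ ∈ B`, the triplet on `{a₀, b₀, x}` says whether
`x` joins `A`, joins `B`, or hangs off `A ∪ B`, and the rule "`ab|c` implies `ab|d` or `ad|c`",
valid in every tree and hence in `R` on any four leaves, propagates this to all other triplets
through `x`.
-/

/-- Rooted binary trees with leaves labelled by `V`. -/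
inductive RTree (V : Type*) : Type _ where
  | leaf : V → RTree V
  | node : RTree V → RTree V → RTree V

namespace RTree

variable {V : Type*} [DecidableEq V]

/-- The list of leaf labels of a tree, from left to right. -/
def leafList : RTree V → List V
  | .leaf x => [x]
  | .node l r => l.leafList ++ r.leafList

/-- The set of leaf labels of a tree. -/
def leaves (t : RTree V) : Finset V := t.leafList.toFinset

/-- A tree is proper when all its leaf labels are distinct. -/
def Proper (t : RTree V) : Prop := t.leafList.Nodup

/-- `Consistent T a b c` means that the rooted triplet `ab|c` is consistent
with `T`, i.e. the restriction of `T` to `{a, b, c}` is homeomorphic to the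
rooted binary tree in which `a` and `b` are siblings below one child of the
root, the other child being `c`. -/
def Consistent : RTree V → V → V → V → Prop
  | .leaf _, _, _, _ => False
  | .node l r, a, b, c =>
      (a ∈ l.leaves ∧ b ∈ l.leaves ∧ c ∈ l.leaves ∧ Consistent l a b c) ∨
      (a ∈ r.leaves ∧ b ∈ r.leaves ∧ c ∈ r.leaves ∧ Consistent r a b c) ∨
      (a ∈ l.leaves ∧ b ∈ l.leaves ∧ c ∈ r.leaves) ∨
      (a ∈ r.leaves ∧ b ∈ r.leaves ∧ c ∈ l.leaves)

end RTree

variable {V : Type*} [DecidableEq V]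

/-- A dense rooted-triplet instance is encoded by a map `R` assigning to each
`3`-subset `{a, b, c}` its chosen apex: `R {a, b, c} = c` means that the
triplet `ab|c` belongs to the instance. Validity requires the apex to belong
to the `3`-set. -/
def TripletValid (R : Finset V → V) (S : Finset V) : Prop :=
  ∀ a b c : V, a ∈ S → b ∈ S → c ∈ S → a ≠ b → a ≠ c → b ≠ c →
    R {a, b, c} ∈ ({a, b, c} : Finset V)

/-- `Realizes T R S`: every rooted triplet of the instance `R` on leaves of
`S` is consistent with the tree `T`. -/
def Realizes (T : RTree V) (R : Finset V → V) (S : Finset V) : Prop :=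
  ∀ a b c : V, a ∈ S → b ∈ S → c ∈ S → a ≠ b → a ≠ c → b ≠ c →
    R {a, b, c} = c → T.Consistent a b c

/-- The instance `R` restricted to `S` is consistent: some rooted binary tree
over `S` realizes all its triplets. -/
def TripletConsistentOn (R : Finset V → V) (S : Finset V) : Prop :=
  ∃ T : RTree V, T.Proper ∧ T.leaves = S ∧ Realizes T R S

namespace RTree

@[simp] lemma leaves_leaf (x : V) : (leaf x).leaves = {x} := rfl

@[simp] lemma leaves_node (l r : RTree V) : (node l r).leaves = l.leaves ∪ r.leaves := by
  simp [leaves, leafList]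

lemma proper_node {l r : RTree V} :
    (node l r).Proper ↔ l.Proper ∧ r.Proper ∧ Disjoint l.leaves r.leaves := by
  simp only [Proper, leafList, List.nodup_append, leaves, Finset.disjoint_left, List.mem_toFinset]
  exact and_congr_right fun _ => and_congr_right fun _ =>
    ⟨fun h _ ha hb => h _ ha _ hb rfl, fun h _ ha _ hb hab => h ha (hab ▸ hb)⟩

variable {t l r : RTree V} {a b c d : V}

lemma Consistent.swap (h : t.Consistent a b c) : t.Consistent b a c := by
  induction t with
  | leaf => exact h.elim
  | node l r ihl ihr =>
    rcases h with ⟨ha, hb, hc, h⟩ | ⟨ha, hb, hc, h⟩ | ⟨ha, hb, hc⟩ | ⟨ha, hb, hc⟩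
    exacts [.inl ⟨hb, ha, hc, ihl h⟩, .inr (.inl ⟨hb, ha, hc, ihr h⟩),
      .inr (.inr (.inl ⟨hb, ha, hc⟩)), .inr (.inr (.inr ⟨hb, ha, hc⟩))]

lemma Consistent.or_of_mem (h : t.Consistent a b c) (hd : d ∈ t.leaves) :
    t.Consistent a b d ∨ t.Consistent a d c := by
  induction t with
  | leaf => exact h.elim
  | node l r ihl ihr =>
    rw [leaves_node, Finset.mem_union] at hd
    rcases h with ⟨ha, hb, hc, h⟩ | ⟨ha, hb, hc, h⟩ | ⟨ha, hb, hc⟩ | ⟨ha, hb, hc⟩ <;>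
      rcases hd with hd | hd
    · exact (ihl h hd).imp (.inl ⟨ha, hb, hd, ·⟩) (.inl ⟨ha, hd, hc, ·⟩)
    · exact .inl (.inr (.inr (.inl ⟨ha, hb, hd⟩)))
    · exact .inl (.inr (.inr (.inr ⟨ha, hb, hd⟩)))
    · exact (ihr h hd).imp (.inr <| .inl ⟨ha, hb, hd, ·⟩) (.inr <| .inl ⟨ha, hd, hc, ·⟩)
    · exact .inr (.inr (.inr (.inl ⟨ha, hd, hc⟩)))
    · exact .inl (.inr (.inr (.inl ⟨ha, hb, hd⟩)))
    · exact .inl (.inr (.inr (.inr ⟨ha, hb, hd⟩)))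
    · exact .inr (.inr (.inr (.inr ⟨ha, hd, hc⟩)))

lemma Consistent.mem_left_iff (hD : Disjoint l.leaves r.leaves)
    (h : (node l r).Consistent a b c) : a ∈ l.leaves ↔ b ∈ l.leaves := by
  have ha : a ∈ l.leaves → a ∉ r.leaves := fun hx => Finset.disjoint_left.1 hD hx
  have hb : b ∈ l.leaves → b ∉ r.leaves := fun hx => Finset.disjoint_left.1 hD hx
  simp only [Consistent] at h
  tauto

lemma Consistent.of_node_left (hD : Disjoint l.leaves r.leaves)
    (h : (node l r).Consistent a b c) (ha : a ∈ l.leaves) (hc : c ∈ l.leaves) :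
    l.Consistent a b c := by
  have := Finset.disjoint_left.1 hD ha
  have := Finset.disjoint_left.1 hD hc
  simp only [Consistent] at h
  tauto

lemma Consistent.of_node_right (hD : Disjoint l.leaves r.leaves)
    (h : (node l r).Consistent a b c) (ha : a ∈ r.leaves) (hc : c ∈ r.leaves) :
    r.Consistent a b c := by
  have := Finset.disjoint_right.1 hD ha
  have := Finset.disjoint_right.1 hD hc
  simp only [Consistent] at h
  tauto

lemma Consistent.asymm (ht : t.Proper) (h : t.Consistent a b c) : ¬ t.Consistent a c b := by
  induction t with
  | leaf => exact h.elim
  | node l r ihl ihr =>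
    obtain ⟨hl, hr, hD⟩ := proper_node.1 ht
    have ha : a ∈ l.leaves → a ∉ r.leaves := fun hx => Finset.disjoint_left.1 hD hx
    have hb : b ∈ l.leaves → b ∉ r.leaves := fun hx => Finset.disjoint_left.1 hD hx
    have hc : c ∈ l.leaves → c ∉ r.leaves := fun hx => Finset.disjoint_left.1 hD hx
    intro h'
    rcases h with ⟨ha1, hb1, hc1, h⟩ | ⟨ha1, hb1, hc1, h⟩ | ⟨ha1, hb1, hc1⟩ | ⟨ha1, hb1, hc1⟩ <;>
      rcases h' with ⟨ha2, hc2, hb2, h'⟩ | ⟨ha2, hc2, hb2, h'⟩ | ⟨ha2, hc2, hb2⟩ | ⟨ha2, hc2, hb2⟩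
    all_goals first
      | exact ihl hl h h'
      | exact ihr hr h h'
      | exact ha ‹_› ‹_›
      | exact hb ‹_› ‹_›
      | exact hc ‹_› ‹_›

end RTree

section Triplets

variable {R : Finset V → V} {a b c : V}

def HasTriplet (R : Finset V → V) (a b c : V) : Prop :=
  a ≠ b ∧ a ≠ c ∧ b ≠ c ∧ R {a, b, c} = c

lemma HasTriplet.swap (h : HasTriplet R a b c) : HasTriplet R b a c := by
  obtain ⟨hab, hac, hbc, h⟩ := h
  exact ⟨hab.symm, hbc, hac, by rwa [Finset.insert_comm]⟩

lemma HasTriplet.asymm (h : HasTriplet R a b c) : ¬ HasTriplet R a c b := by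
  rintro ⟨-, -, hcb, h'⟩
  rw [Finset.pair_comm, h.2.2.2] at h'
  exact hcb h'

lemma Realizes.consistent {T : RTree V} {S : Finset V} (hT : Realizes T R S)
    (ha : a ∈ S) (hb : b ∈ S) (hc : c ∈ S) (h : HasTriplet R a b c) : T.Consistent a b c :=
  hT a b c ha hb hc h.1 h.2.1 h.2.2.1 h.2.2.2

lemma realizes_of_hasTriplet {T : RTree V} {S : Finset V}
    (hT : ∀ a ∈ S, ∀ b ∈ S, ∀ c ∈ S, HasTriplet R a b c → T.Consistent a b c) :
    Realizes T R S :=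
  fun a b c ha hb hc hab hac hbc h => hT a ha b hb c hc ⟨hab, hac, hbc, h⟩

lemma hasTriplet_trichotomy [Fintype V] (hval : TripletValid R Finset.univ)
    (hab : a ≠ b) (hac : a ≠ c) (hbc : b ≠ c) :
    HasTriplet R a b c ∨ HasTriplet R a c b ∨ HasTriplet R b c a := by
  have h := hval a b c (Finset.mem_univ a) (Finset.mem_univ b) (Finset.mem_univ c) hab hac hbc
  simp only [Finset.mem_insert, Finset.mem_singleton] at h
  rcases h with h | h | h
  · refine .inr (.inr ⟨hbc, hab.symm, hac.symm, ?_⟩)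
    rwa [Finset.pair_comm, Finset.insert_comm]
  · exact .inr (.inl ⟨hac, hab, hbc.symm, by rwa [Finset.pair_comm]⟩)
  · exact .inl ⟨hab, hac, hbc, h⟩

lemma Realizes.hasTriplet [Fintype V] (hval : TripletValid R Finset.univ) {T : RTree V}
    {S : Finset V} (hT : Realizes T R S) (hp : T.Proper)
    (ha : a ∈ S) (hb : b ∈ S) (hc : c ∈ S) (hab : a ≠ b) (hac : a ≠ c) (hbc : b ≠ c)
    (h : T.Consistent a b c) : HasTriplet R a b c := by
  rcases hasTriplet_trichotomy hval hab hac hbc with h' | h' | h'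
  · exact h'
  · exact absurd (hT.consistent ha hc hb h') (h.asymm hp)
  · exact absurd (hT.consistent hb hc ha h') (h.swap.asymm hp)

end Triplets

section FourPoint

variable [Fintype V] {R : Finset V → V} {a b c d p q r s x : V}
variable (hval : TripletValid R Finset.univ)
variable (H4 : ∀ C : Finset V, C.card = 4 → TripletConsistentOn R C)
include hval H4

lemma HasTriplet.or_of_fourPoint (h : HasTriplet R a b c) (hda : d ≠ a) :
    HasTriplet R a b d ∨ HasTriplet R a d c := by
  obtain rfl | hdb := eq_or_ne d b
  · exact .inr h
  obtain rfl | hdc := eq_or_ne d c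
  · exact .inl h
  have ⟨hab, hac, hbc, _⟩ := h
  have hC : ({a, b, c, d} : Finset V).card = 4 :=
    Finset.card_eq_four.2 ⟨a, b, c, d, hab, hac, hda.symm, hbc, hdb.symm, hdc.symm, rfl⟩
  obtain ⟨T, hp, hl, hT⟩ := H4 _ hC
  have hd : d ∈ T.leaves := by simp [hl]
  exact ((hT.consistent (by simp) (by simp) (by simp) h).or_of_mem hd).imp
    (hT.hasTriplet hval hp (by simp) (by simp) (by simp) hab hda.symm hdb.symm)
    (hT.hasTriplet hval hp (by simp) (by simp) (by simp) hda.symm hac hdc)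

lemma HasTriplet.replace_right (h : HasTriplet R p q x)
    (hd : HasTriplet R p d q ∨ HasTriplet R q d p) : HasTriplet R p d x := by
  have hdp : d ≠ p := by rcases hd with hd | hd; exacts [hd.1.symm, hd.2.2.1]
  refine (h.or_of_fourPoint hval H4 hdp).resolve_left fun h' => ?_
  rcases hd with hd | hd
  exacts [h'.asymm hd, h'.swap.asymm hd]

lemma HasTriplet.replace_apex (h : HasTriplet R p q r) (hs : HasTriplet R r s p) :
    HasTriplet R p q s :=
  (h.or_of_fourPoint hval H4 hs.2.2.1).resolve_right fun h' => h'.swap.asymm hs.swap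

lemma HasTriplet.trans (h₁ : HasTriplet R p q s) (h₂ : HasTriplet R q r s) (hpr : p ≠ r) :
    HasTriplet R p r s := by
  rcases h₁.or_of_fourPoint hval H4 hpr.symm with h | h
  · rcases h₂.swap.or_of_fourPoint hval H4 hpr with h' | h'
    exacts [absurd h'.swap h.swap.asymm, h'.swap]
  · exact h

end FourPoint

section Splits

variable {R : Finset V → V} {A B : Finset V} {a₀ b₀ x : V}

def Separates (R : Finset V → V) (A B : Finset V) : Prop :=
  ∀ a ∈ A, ∀ a' ∈ A, ∀ b ∈ B, a ≠ a' → HasTriplet R a a' b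

structure IsSplit (R : Finset V → V) (A B : Finset V) : Prop where
  left_nonempty : A.Nonempty
  right_nonempty : B.Nonempty
  disjoint : Disjoint A B
  separates_left : Separates R A B
  separates_right : Separates R B A

def HasSplits (R : Finset V → V) (S : Finset V) : Prop :=
  ∀ T ⊆ S, 2 ≤ T.card → ∃ A B, A ∪ B = T ∧ IsSplit R A B

lemma separates_singleton (x : V) (B : Finset V) : Separates R {x} B := by
  intro a ha a' ha' _ _ hne
  rw [Finset.mem_singleton] at ha ha'
  exact absurd (ha.trans ha'.symm) hne

lemma isSplit_singleton {y : V} (h : x ≠ y) : IsSplit R {x} {y} :=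
  ⟨Finset.singleton_nonempty x, Finset.singleton_nonempty y,
    Finset.disjoint_singleton.2 h, separates_singleton x _, separates_singleton y _⟩

lemma IsSplit.symm (h : IsSplit R A B) : IsSplit R B A :=
  ⟨h.right_nonempty, h.left_nonempty, h.disjoint.symm, h.separates_right, h.separates_left⟩

lemma HasSplits.mono {S S' : Finset V} (h : HasSplits R S) (hS : S' ⊆ S) : HasSplits R S' :=
  fun T hT => h T (hT.trans hS)

variable [Fintype V] (hval : TripletValid R Finset.univ)
variable (H4 : ∀ C : Finset V, C.card = 4 → TripletConsistentOn R C)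
include hval H4

lemma IsSplit.separates_union_singleton (hs : IsSplit R A B) (ha₀ : a₀ ∈ A) (hb₀ : b₀ ∈ B)
    (h : HasTriplet R a₀ b₀ x) : Separates R (A ∪ B) {x} := by
  have hA : ∀ a ∈ A, HasTriplet R a b₀ x := by
    intro a ha
    obtain rfl | hne := eq_or_ne a a₀
    · exact h
    exact (h.swap.replace_right hval H4
      (.inr (hs.separates_left a₀ ha₀ a ha b₀ hb₀ hne.symm))).swap
  have hAB : ∀ a ∈ A, ∀ b ∈ B, HasTriplet R a b x := by
    intro a ha b hb
    obtain rfl | hne := eq_or_ne b b₀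
    · exact hA a ha
    exact (hA a ha).replace_right hval H4 (.inr (hs.separates_right b₀ hb₀ b hb a ha hne.symm))
  intro y hy z hz w hw hyz
  rw [Finset.mem_singleton.1 hw]
  rw [Finset.mem_union] at hy hz
  rcases hy with hy | hy <;> rcases hz with hz | hz
  · exact (hA y hy).replace_right hval H4 (.inl (hs.separates_left y hy z hz b₀ hb₀ hyz))
  · exact hAB y hy z hz
  · exact (hAB z hz y hy).swap
  · exact (hAB a₀ ha₀ y hy).swap.replace_right hval H4
      (.inl (hs.separates_right y hy z hz a₀ ha₀ hyz))

lemma IsSplit.insert_left (hs : IsSplit R A B) (hx : x ∉ A ∪ B) (ha₀ : a₀ ∈ A) (hb₀ : b₀ ∈ B)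
    (h : HasTriplet R a₀ x b₀) : IsSplit R (insert x A) B := by
  have hxA : x ∉ A := fun h => hx (Finset.mem_union_left B h)
  have hxB : x ∉ B := fun h => hx (Finset.mem_union_right A h)
  have hA : ∀ a ∈ A, HasTriplet R a x b₀ := by
    intro a ha
    obtain rfl | hne := eq_or_ne a a₀
    · exact h
    exact (hs.separates_left a ha a₀ ha₀ b₀ hb₀ hne).trans hval H4 h (ne_of_mem_of_not_mem ha hxA)
  have hAB : ∀ a ∈ A, ∀ b ∈ B, HasTriplet R a x b := by
    intro a ha b hb
    obtain rfl | hne := eq_or_ne b b₀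
    · exact hA a ha
    exact (hA a ha).replace_apex hval H4 (hs.separates_right b₀ hb₀ b hb a ha hne.symm)
  refine ⟨Finset.insert_nonempty x A, hs.right_nonempty,
    Finset.disjoint_insert_left.2 ⟨hxB, hs.disjoint⟩, ?_, ?_⟩
  · intro y hy z hz b hb hyz
    rw [Finset.mem_insert] at hy hz
    rcases hy with rfl | hy <;> rcases hz with rfl | hz
    · exact absurd rfl hyz
    · exact (hAB z hz b hb).swap
    · exact hAB y hy b hb
    · exact hs.separates_left y hy z hz b hb hyz
  · intro b hb b' hb' y hy hbb'
    rcases Finset.mem_insert.1 hy with rfl | hy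
    · exact (hs.separates_right b hb b' hb' a₀ ha₀ hbb').replace_apex hval H4 (hAB a₀ ha₀ b hb)
    · exact hs.separates_right b hb b' hb' y hy hbb'

lemma exists_isSplit (T : Finset V) (hT : 2 ≤ T.card) : ∃ A B, A ∪ B = T ∧ IsSplit R A B := by
  induction T using Finset.induction_on with
  | empty => simp at hT
  | insert x s hx ih =>
    rcases Nat.lt_or_ge s.card 2 with hcard | hcard
    · rw [Finset.card_insert_of_notMem hx] at hT
      obtain ⟨y, rfl⟩ := Finset.card_eq_one.1 (by omega : s.card = 1)
      exact ⟨{x}, {y}, Finset.singleton_union x {y},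
        isSplit_singleton (Finset.notMem_singleton.1 hx)⟩
    obtain ⟨A, B, rfl, hs⟩ := ih hcard
    obtain ⟨a₀, ha₀⟩ := hs.left_nonempty
    obtain ⟨b₀, hb₀⟩ := hs.right_nonempty
    have ha₀x : a₀ ≠ x := ne_of_mem_of_not_mem (Finset.mem_union_left B ha₀) hx
    have hb₀x : b₀ ≠ x := ne_of_mem_of_not_mem (Finset.mem_union_right A hb₀) hx
    have ha₀b₀ : a₀ ≠ b₀ := ne_of_mem_of_not_mem ha₀ (Finset.disjoint_right.1 hs.disjoint hb₀)
    rcases hasTriplet_trichotomy hval ha₀b₀ ha₀x hb₀x with h | h | h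
    · refine ⟨A ∪ B, {x}, by rw [Finset.union_comm, Finset.singleton_union], ?_⟩
      exact ⟨hs.left_nonempty.mono Finset.subset_union_left, Finset.singleton_nonempty x,
        Finset.disjoint_singleton_right.2 hx, hs.separates_union_singleton hval H4 ha₀ hb₀ h,
        separates_singleton x _⟩
    · exact ⟨insert x A, B, Finset.insert_union x A B, hs.insert_left hval H4 hx ha₀ hb₀ h⟩
    · refine ⟨A, insert x B, Finset.union_insert x A B, ?_⟩
      rw [Finset.union_comm] at hx
      exact (hs.symm.insert_left hval H4 hx hb₀ ha₀ h).symm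

end Splits

section Trees

open RTree

variable {R : Finset V → V} {a a' b : V}

lemma realizes_node {l r : RTree V} (hl : Realizes l R l.leaves) (hr : Realizes r R r.leaves)
    (hs : IsSplit R l.leaves r.leaves) : Realizes (node l r) R (l.leaves ∪ r.leaves) := by
  refine realizes_of_hasTriplet fun x hx y hy z hz h => ?_
  rw [Finset.mem_union] at hx hy hz
  rcases hx with hx | hx <;> rcases hy with hy | hy <;> rcases hz with hz | hz
  · exact .inl ⟨hx, hy, hz, hl.consistent hx hy hz h⟩
  · exact .inr (.inr (.inl ⟨hx, hy, hz⟩))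
  · exact absurd (hs.separates_left x hx z hz y hy h.2.1) h.asymm
  · exact absurd (hs.separates_right y hy z hz x hx h.2.2.1) h.swap.asymm
  · exact absurd (hs.separates_left y hy z hz x hx h.2.2.1) h.swap.asymm
  · exact absurd (hs.separates_right x hx z hz y hy h.2.1) h.asymm
  · exact .inr (.inr (.inr ⟨hx, hy, hz⟩))
  · exact .inr (.inl ⟨hx, hy, hz, hr.consistent hx hy hz h⟩)

lemma HasSplits.tripletConsistentOn {S : Finset V} (hS : HasSplits R S) (hne : S.Nonempty) :
    TripletConsistentOn R S := by
  induction S using Finset.strongInduction with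
  | H S ih =>
  rcases Nat.lt_or_ge S.card 2 with hcard | hcard
  · obtain ⟨x, rfl⟩ := Finset.card_eq_one.1 (by have := hne.card_pos; omega : S.card = 1)
    refine ⟨leaf x, List.nodup_singleton x, rfl, realizes_of_hasTriplet ?_⟩
    intro a ha b hb _ _ h
    exact absurd ((Finset.mem_singleton.1 ha).trans (Finset.mem_singleton.1 hb).symm) h.1
  obtain ⟨A, B, rfl, hs⟩ := hS S subset_rfl hcard
  have hAB : A ⊂ A ∪ B := by
    obtain ⟨b, hb⟩ := hs.right_nonempty
    exact left_lt_sup.2 fun hBA => Finset.disjoint_right.1 hs.disjoint hb (hBA hb)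
  have hBA : B ⊂ A ∪ B := by
    obtain ⟨a, ha⟩ := hs.left_nonempty
    exact right_lt_sup.2 fun hAB => Finset.disjoint_left.1 hs.disjoint ha (hAB ha)
  obtain ⟨l, hpl, rfl, hl⟩ := ih A hAB (hS.mono hAB.subset) hs.left_nonempty
  obtain ⟨r, hpr, rfl, hr⟩ := ih B hBA (hS.mono hBA.subset) hs.right_nonempty
  exact ⟨node l r, proper_node.2 ⟨hpl, hpr, hs.disjoint⟩, leaves_node l r, realizes_node hl hr hs⟩

variable [Fintype V] (hval : TripletValid R Finset.univ)
include hval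

-- `a ∈ l.leaves ↔ b ∉ l.leaves` says that `a` and `b` lie in different subtrees.
lemma Realizes.hasTriplet_of_node {l r : RTree V} {S : Finset V} (hT : Realizes (node l r) R S)
    (hD : Disjoint l.leaves r.leaves) (ha : a ∈ S) (ha' : a' ∈ S) (hb : b ∈ S) (hne : a ≠ a')
    (hab : a ∈ l.leaves ↔ b ∉ l.leaves) (ha'b : a' ∈ l.leaves ↔ b ∉ l.leaves) :
    HasTriplet R a a' b := by
  have hab' : a ≠ b := by rintro rfl; tauto
  have ha'b' : a' ≠ b := by rintro rfl; tauto
  rcases hasTriplet_trichotomy hval hne hab' ha'b' with h | h | h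
  · exact h
  · have := (hT.consistent ha hb ha' h).mem_left_iff hD
    tauto
  · have := (hT.consistent ha' hb ha h).mem_left_iff hD
    tauto

lemma hasSplits_of_realizes {t : RTree V} (ht : t.Proper) (hT : Realizes t R t.leaves) :
    HasSplits R t.leaves := by
  induction t with
  | leaf x =>
    intro U hU hcard
    have := Finset.card_le_card hU
    simp only [leaves_leaf, Finset.card_singleton] at this
    omega
  | node l r ihl ihr =>
    obtain ⟨hpl, hpr, hD⟩ := proper_node.1 ht
    rw [leaves_node] at hT ⊢
    have hl : Realizes l R l.leaves := realizes_of_hasTriplet fun a ha b hb c hc h =>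
      (hT.consistent (Finset.mem_union_left _ ha) (Finset.mem_union_left _ hb)
        (Finset.mem_union_left _ hc) h).of_node_left hD ha hc
    have hr : Realizes r R r.leaves := realizes_of_hasTriplet fun a ha b hb c hc h =>
      (hT.consistent (Finset.mem_union_right _ ha) (Finset.mem_union_right _ hb)
        (Finset.mem_union_right _ hc) h).of_node_right hD ha hc
    intro U hU hcard
    by_cases hUl : U ⊆ l.leaves
    · exact ihl hpl hl U hUl hcard
    by_cases hUr : U ⊆ r.leaves
    · exact ihr hpr hr U hUr hcard
    obtain ⟨y, hyU, hyl⟩ := Finset.not_subset.1 hUl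
    obtain ⟨z, hzU, hzr⟩ := Finset.not_subset.1 hUr
    have hrl : ∀ {u}, u ∈ r.leaves → u ∉ l.leaves := fun hu => Finset.disjoint_right.1 hD hu
    refine ⟨U ∩ l.leaves, U ∩ r.leaves, ?_, ⟨?_, ?_, ?_, ?_, ?_⟩⟩
    · rw [← Finset.inter_union_distrib_left, Finset.inter_eq_left.2 hU]
    · exact ⟨z, Finset.mem_inter.2 ⟨hzU, by simpa [hzr] using hU hzU⟩⟩
    · exact ⟨y, Finset.mem_inter.2 ⟨hyU, by simpa [hyl] using hU hyU⟩⟩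
    · exact hD.mono Finset.inter_subset_right Finset.inter_subset_right
    · intro a ha a' ha' b hb hne
      simp only [Finset.mem_inter] at ha ha' hb
      exact hT.hasTriplet_of_node hval hD (hU ha.1) (hU ha'.1) (hU hb.1) hne
        (iff_of_true ha.2 (hrl hb.2)) (iff_of_true ha'.2 (hrl hb.2))
    · intro b hb b' hb' a ha hne
      simp only [Finset.mem_inter] at ha hb' hb
      exact hT.hasTriplet_of_node hval hD (hU hb.1) (hU hb'.1) (hU ha.1) hne
        (iff_of_false (hrl hb.2) (not_not.2 ha.2)) (iff_of_false (hrl hb'.2) (not_not.2 ha.2))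

lemma TripletConsistentOn.hasSplits {S : Finset V} (h : TripletConsistentOn R S) :
    HasSplits R S := by
  obtain ⟨t, ht, rfl, hT⟩ := h
  exact hasSplits_of_realizes hval ht hT

end Trees

/-- A dense set of rooted triplets over `V` is consistent if and only if it
contains no conflict on four leaves. -/
theorem triplet_consistent_iff_no_conflict4 [Fintype V] [Nonempty V]
    (R : Finset V → V) (hval : TripletValid R Finset.univ) :
    TripletConsistentOn R Finset.univ ↔
      ∀ C : Finset V, C.card = 4 → TripletConsistentOn R C := by
  constructor
  · intro h C hC
    exact ((h.hasSplits hval).mono (Finset.subset_univ C)).tripletConsistentOn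
      (by rw [← Finset.card_pos, hC]; norm_num)
  · intro H4
    exact HasSplits.tripletConsistentOn (fun T _ => exists_isSplit hval H4 T)
      Finset.univ_nonempty
end

section
/- If R = (V, R) is a dense rooted-triplet instance admitting an edition of at most k triplets making it consistent, and C = {C_1, ..., C_l} is a conflict packing (each C_i a 4-leaf conflict, each C_i either sharing at most two leaves with the union of previous conflicts, or having exactly one new leaf which is a seed of C_i), then l ≤ k and |V(C)| ≤ 4k. -/
namespace RTree

variable {V : Type*} [DecidableEq V]

/-- Restriction of a tree to a set of leaf labels (possibly empty). -/
def restrict : RTree V → Finset V → Option (RTree V)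
  | .leaf x, S => if x ∈ S then some (.leaf x) else none
  | .node l r, S =>
    match restrict l S, restrict r S with
    | some l', some r' => some (.node l' r')
    | some l', none => some l'
    | none, some r' => some r'
    | none, none => none

lemma restrict_leafList (t : RTree V) (S : Finset V) :
    (restrict t S).elim [] leafList = t.leafList.filter (· ∈ S) := by
  induction t with
  | leaf x =>
      simp only [restrict, leafList]
      split <;> simp_all [leafList]
  | node l r ihl ihr =>
      rcases h1 : restrict l S with _ | l' <;> rcases h2 : restrict r S with _ | r' <;>
        rw [h1] at ihl <;> rw [h2] at ihr <;>
        simp_all [restrict, leafList, List.filter_append]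

lemma restrict_some_leafList {t t' : RTree V} {S : Finset V} (h : restrict t S = some t') :
    t'.leafList = t.leafList.filter (· ∈ S) := by
  have := restrict_leafList t S
  rw [h] at this
  exact this

lemma restrict_none_leafList {t : RTree V} {S : Finset V} (h : restrict t S = none) :
    t.leafList.filter (· ∈ S) = [] := by
  have := restrict_leafList t S
  rw [h] at this
  exact this.symm

lemma mem_leaves_iff {t : RTree V} {x : V} : x ∈ t.leaves ↔ x ∈ t.leafList := by
  simp [leaves]

lemma mem_leaves_restrict {t t' : RTree V} {S : Finset V} (h : restrict t S = some t') {x : V} :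
    x ∈ t'.leaves ↔ x ∈ t.leaves ∧ x ∈ S := by
  simp [mem_leaves_iff, restrict_some_leafList h, List.mem_filter]

lemma restrict_isSome_of_mem {t : RTree V} {S : Finset V} {x : V}
    (hx : x ∈ t.leaves) (hS : x ∈ S) : ∃ t', restrict t S = some t' := by
  rcases h : restrict t S with _ | t'
  · exfalso
    have hnil := restrict_none_leafList h
    have : x ∈ t.leafList.filter (· ∈ S) := by
      rw [List.mem_filter]
      exact ⟨mem_leaves_iff.1 hx, by simpa using hS⟩
    rw [hnil] at this
    simp at this
  · exact ⟨t', rfl⟩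

lemma proper_restrict {t t' : RTree V} {S : Finset V} (h : restrict t S = some t')
    (hp : t.Proper) : t'.Proper := by
  rw [Proper, restrict_some_leafList h]
  exact hp.filter _

lemma consistent_restrict : ∀ {t t' : RTree V} {S : Finset V} {a b c : V},
    restrict t S = some t' → t.Consistent a b c → a ∈ S → b ∈ S → c ∈ S →
    t'.Consistent a b c := by
  intro t
  induction t with
  | leaf x => intro t' S a b c _ hcon _ _ _; exact hcon.elim
  | node l r ihl ihr =>
    intro t' S a b c hres hcon ha hb hc
    rcases hcon with ⟨ha', hb', hc', h⟩ | ⟨ha', hb', hc', h⟩ | ⟨ha', hb', hc'⟩ |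
      ⟨ha', hb', hc'⟩
    · obtain ⟨l', hl'⟩ := restrict_isSome_of_mem ha' ha
      rcases h2 : restrict r S with _ | r'
      · have ht' : t' = l' := by
          rw [restrict, hl', h2] at hres
          exact (Option.some.inj hres).symm
        subst ht'
        exact ihl hl' h ha hb hc
      · have ht' : t' = .node l' r' := by
          rw [restrict, hl', h2] at hres
          exact (Option.some.inj hres).symm
        subst ht'
        exact Or.inl ⟨(mem_leaves_restrict hl').2 ⟨ha', ha⟩,
          (mem_leaves_restrict hl').2 ⟨hb', hb⟩,
          (mem_leaves_restrict hl').2 ⟨hc', hc⟩, ihl hl' h ha hb hc⟩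
    · obtain ⟨r', hr'⟩ := restrict_isSome_of_mem ha' ha
      rcases h2 : restrict l S with _ | l'
      · have ht' : t' = r' := by
          rw [restrict, h2, hr'] at hres
          exact (Option.some.inj hres).symm
        subst ht'
        exact ihr hr' h ha hb hc
      · have ht' : t' = .node l' r' := by
          rw [restrict, h2, hr'] at hres
          exact (Option.some.inj hres).symm
        subst ht'
        exact Or.inr (Or.inl ⟨(mem_leaves_restrict hr').2 ⟨ha', ha⟩,
          (mem_leaves_restrict hr').2 ⟨hb', hb⟩,
          (mem_leaves_restrict hr').2 ⟨hc', hc⟩, ihr hr' h ha hb hc⟩)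
    · obtain ⟨l', hl'⟩ := restrict_isSome_of_mem ha' ha
      obtain ⟨r', hr'⟩ := restrict_isSome_of_mem hc' hc
      have ht' : t' = .node l' r' := by
        rw [restrict, hl', hr'] at hres
        exact (Option.some.inj hres).symm
      subst ht'
      exact Or.inr (Or.inr (Or.inl ⟨(mem_leaves_restrict hl').2 ⟨ha', ha⟩,
        (mem_leaves_restrict hl').2 ⟨hb', hb⟩,
        (mem_leaves_restrict hr').2 ⟨hc', hc⟩⟩))
    · obtain ⟨r', hr'⟩ := restrict_isSome_of_mem ha' ha
      obtain ⟨l', hl'⟩ := restrict_isSome_of_mem hc' hc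
      have ht' : t' = .node l' r' := by
        rw [restrict, hl', hr'] at hres
        exact (Option.some.inj hres).symm
      subst ht'
      exact Or.inr (Or.inr (Or.inr ⟨(mem_leaves_restrict hr').2 ⟨ha', ha⟩,
        (mem_leaves_restrict hr').2 ⟨hb', hb⟩,
        (mem_leaves_restrict hl').2 ⟨hc', hc⟩⟩))

end RTree


variable {V : Type*} [DecidableEq V]

/-- A leaf `x` of a conflict `C = {x, b, c, d}` is a seed if `C` remains a
conflict for every possible choice of the triplet on `C \ {x}`. -/
def RTISeed (R : Finset V → V) (x : V) (C : Finset V) : Prop :=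
  x ∈ C ∧ ∀ y ∈ C.erase x,
    ¬ TripletConsistentOn (Function.update R (C.erase x) y) C

lemma tripletConsistentOn_mono [Fintype V] {R' : Finset V → V}
    (h : TripletConsistentOn R' Finset.univ) {S : Finset V} (hS : S.Nonempty) :
    TripletConsistentOn R' S := by
  obtain ⟨T, hp, hl, hr⟩ := h
  obtain ⟨x, hx⟩ := hS
  have hxT : x ∈ T.leaves := by rw [hl]; exact Finset.mem_univ x
  obtain ⟨T', hT'⟩ := RTree.restrict_isSome_of_mem hxT hx
  refine ⟨T', RTree.proper_restrict hT' hp, ?_, ?_⟩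
  · ext y
    rw [RTree.mem_leaves_restrict hT', hl]
    simp
  · intro a b c ha hb hc hab hac hbc hR
    exact RTree.consistent_restrict hT'
      (hr a b c (Finset.mem_univ a) (Finset.mem_univ b) (Finset.mem_univ c) hab hac hbc hR)
      ha hb hc

lemma tripletConsistentOn_congr {R1 R2 : Finset V → V} {S : Finset V}
    (h : ∀ S' ⊆ S, S'.card = 3 → R1 S' = R2 S') :
    TripletConsistentOn R1 S → TripletConsistentOn R2 S := by
  rintro ⟨T, hp, hl, hr⟩
  refine ⟨T, hp, hl, fun a b c ha hb hc hab hac hbc hR => ?_⟩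
  refine hr a b c ha hb hc hab hac hbc ?_
  rw [h {a, b, c} ?_ (Finset.card_eq_three.2 ⟨a, b, c, hab, hac, hbc, rfl⟩)]
  · exact hR
  · intro y hy
    simp only [Finset.mem_insert, Finset.mem_singleton] at hy
    rcases hy with rfl | rfl | rfl <;> assumption

lemma exists_edit {R R' : Finset V → V} {S : Finset V}
    (hc : ¬ TripletConsistentOn R S) (hc' : TripletConsistentOn R' S) :
    ∃ S' ⊆ S, S'.card = 3 ∧ R S' ≠ R' S' := by
  by_contra h
  push_neg at h
  exact hc (tripletConsistentOn_congr (fun S' hs h3 => (h S' hs h3).symm) hc')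

lemma seed_edit [Fintype V] {R R' : Finset V → V} {x : V} {Ci : Finset V}
    (h4 : Ci.card = 4) (hseed : RTISeed R x Ci)
    (hval' : TripletValid R' Finset.univ)
    (hc' : TripletConsistentOn R' Ci) :
    ∃ S' ⊆ Ci, S'.card = 3 ∧ x ∈ S' ∧ R S' ≠ R' S' := by
  obtain ⟨hx, hseed⟩ := hseed
  by_contra h
  push_neg at h
  set E := Ci.erase x with hEdef
  have hE3 : E.card = 3 := by rw [hEdef, Finset.card_erase_of_mem hx, h4]
  obtain ⟨a, b, c, hab, hac, hbc, hEeq⟩ := Finset.card_eq_three.1 hE3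
  have hy : R' E ∈ E := by
    rw [hEeq]
    exact hval' a b c (Finset.mem_univ a) (Finset.mem_univ b) (Finset.mem_univ c) hab hac hbc
  refine hseed (R' E) hy ?_
  refine tripletConsistentOn_congr (fun S' hs h3 => ?_) hc'
  by_cases hS' : S' = E
  · subst hS'
    simp [Function.update_self]
  · rw [Function.update_of_ne hS']
    have hxS : x ∈ S' := by
      by_contra hxn
      refine hS' (Finset.eq_of_subset_of_card_le ?_ (by omega))
      intro y hy'
      exact Finset.mem_erase.2 ⟨fun he => hxn (he ▸ hy'), hs hy'⟩
    exact (h S' hs h3 hxS).symm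

/-- If a dense rooted-triplet instance admits an edition of at most `k`
triplets making it consistent, then any conflict packing
`C = (C_1, …, C_l)` — each `C_i` a 4-leaf conflict, each `C_i` (for `i > 1`)
either sharing at most two leaves with the union of the previous conflicts,
or having exactly one new leaf which is a seed of `C_i` — satisfies
`l ≤ k` and `|V(C)| ≤ 4k`. -/
theorem rti_conflict_packing_bound [Fintype V]
    (R : Finset V → V) (hval : TripletValid R Finset.univ) (k : ℕ)
    (hedit : ∃ R' : Finset V → V, TripletValid R' Finset.univ ∧
      TripletConsistentOn R' Finset.univ ∧
      ((Finset.powersetCard 3 (Finset.univ : Finset V)).filter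
        (fun s => R s ≠ R' s)).card ≤ k)
    (l : ℕ) (C : Fin l → Finset V)
    (hC4 : ∀ i, (C i).card = 4)
    (hCconf : ∀ i, ¬ TripletConsistentOn R (C i))
    (hstep : ∀ i : Fin l, 0 < (i : ℕ) →
      ((C i ∩ (Finset.univ.filter (fun j => j < i)).biUnion C).card ≤ 2 ∨
       ∃ x, C i \ (Finset.univ.filter (fun j => j < i)).biUnion C = {x} ∧
         RTISeed R x (C i))) :
    l ≤ k ∧ ((Finset.univ : Finset (Fin l)).biUnion C).card ≤ 4 * k := by
  obtain ⟨R', hval', hcons', hcard⟩ := hedit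
  have hCne : ∀ i, (C i).Nonempty := fun i => Finset.card_pos.1 (by rw [hC4 i]; norm_num)
  have key : ∀ i : Fin l, ∃ S, S ⊆ C i ∧ S.card = 3 ∧ R S ≠ R' S ∧
      (0 < (i : ℕ) → ¬ S ⊆ (Finset.univ.filter (fun j => j < i)).biUnion C) := by
    intro i
    have hCi : TripletConsistentOn R' (C i) := tripletConsistentOn_mono hcons' (hCne i)
    by_cases hi : 0 < (i : ℕ)
    · rcases hstep i hi with hcap | ⟨x, hxeq, hseed⟩
      · obtain ⟨S, hsub, h3, hne⟩ := exists_edit (hCconf i) hCi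
        refine ⟨S, hsub, h3, hne, fun _ hSsub => ?_⟩
        have hle := Finset.card_le_card (Finset.subset_inter hsub hSsub)
        omega
      · obtain ⟨S, hsub, h3, hxS, hne⟩ := seed_edit (hC4 i) hseed hval' hCi
        refine ⟨S, hsub, h3, hne, fun _ hSsub => ?_⟩
        have hxmem : x ∈ C i \ (Finset.univ.filter (fun j => j < i)).biUnion C := by
          rw [hxeq]; exact Finset.mem_singleton_self x
        exact (Finset.mem_sdiff.1 hxmem).2 (hSsub hxS)
    · obtain ⟨S, hsub, h3, hne⟩ := exists_edit (hCconf i) hCi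
      exact ⟨S, hsub, h3, hne, fun hpos => absurd hpos hi⟩
  choose f hf1 hf2 hf3 hf4 using key
  have hinj : Function.Injective f := by
    intro i j hij
    by_contra hne
    rcases Ne.lt_or_gt hne with hlt | hlt
    · exact hf4 j (Nat.lt_of_le_of_lt (Nat.zero_le _) (Fin.lt_def.mp hlt))
        (hij ▸ (hf1 i).trans (Finset.subset_biUnion_of_mem C
          (Finset.mem_filter.2 ⟨Finset.mem_univ i, hlt⟩)))
    · exact hf4 i (Nat.lt_of_le_of_lt (Nat.zero_le _) (Fin.lt_def.mp hlt))
        (hij ▸ (hf1 j).trans (Finset.subset_biUnion_of_mem C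
          (Finset.mem_filter.2 ⟨Finset.mem_univ j, hlt⟩)))
  have hlk : l ≤ k := by
    have hle : (Finset.univ : Finset (Fin l)).card ≤
        ((Finset.powersetCard 3 (Finset.univ : Finset V)).filter (fun s => R s ≠ R' s)).card := by
      apply Finset.card_le_card_of_injOn f
      · intro i _
        exact Finset.mem_filter.2
          ⟨Finset.mem_powersetCard.2 ⟨Finset.subset_univ _, hf2 i⟩, hf3 i⟩
      · exact hinj.injOn
    rw [Finset.card_univ, Fintype.card_fin] at hle
    exact hle.trans hcard
  refine ⟨hlk, ?_⟩
  calc ((Finset.univ : Finset (Fin l)).biUnion C).card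
      ≤ ∑ i, (C i).card := Finset.card_biUnion_le
    _ = 4 * l := by simp [hC4, Finset.sum_const, Finset.card_univ, mul_comm]
    _ ≤ 4 * k := by omega
end

section
/- A dense betweenness instance B = (V, R) is consistent (there exists a linear ordering of V with which every triplet of R is consistent) if and only if B contains no conflict on 4 vertices. -/
variable {V : Type*} [DecidableEq V]

/-- `BtwOrd σ a b c`: `b` lies between `a` and `c` in the ordering `σ`. -/
def BtwOrd (σ : V → ℕ) (a b c : V) : Prop :=
  (σ a < σ b ∧ σ b < σ c) ∨ (σ c < σ b ∧ σ b < σ a)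

/-- A dense betweenness instance is encoded by a map `R` assigning to each
`3`-subset `{a, b, c}` its chosen vertex: `R {a, b, c} = b` means that the
betweenness triplet `abc` (choosing `b`) belongs to the instance. Validity
requires the chosen vertex to belong to the `3`-set. -/
def BetValid (R : Finset V → V) (S : Finset V) : Prop :=
  ∀ a b c : V, a ∈ S → b ∈ S → c ∈ S → a ≠ b → a ≠ c → b ≠ c →
    R {a, b, c} ∈ ({a, b, c} : Finset V)

/-- The betweenness instance `R` restricted to `S` is consistent: some linear
ordering of `S` makes all its triplets consistent. -/
def BetConsistentOn (R : Finset V → V) (S : Finset V) : Prop :=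
  ∃ σ : V → ℕ, Set.InjOn σ ↑S ∧
    ∀ a b c : V, a ∈ S → b ∈ S → c ∈ S → a ≠ b → a ≠ c → b ≠ c →
      R {a, b, c} = b → BtwOrd σ a b c

/-!
Induct on the vertex set, inserting one vertex `v` into a consistent ordering `σ` of the others.
For `x, y` already placed, the triplet on `{x, y, v}` together with the orientation of `x, y` in
`σ` decides on which side of `x` the vertex `v` has to go (`RightOfVia`). A consistent ordering of
the four vertices `{x, y, z, v}` shows that this verdict does not depend on the partner `y`, so
every `x` has a well-defined side. The vertices to the left of `v` then form an initial segment
of `σ`, and inserting `v` at that cut satisfies every triplet through `v`.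
-/

section

variable {R : Finset V → V} {S T : Finset V} {σ τ : V → ℕ} {v x y z : V}

theorem BetValid.mono (hR : BetValid R S) (hTS : T ⊆ S) : BetValid R T :=
  fun a b c ha hb hc => hR a b c (hTS ha) (hTS hb) (hTS hc)

def IsConsistentOrder (R : Finset V → V) (S : Finset V) (σ : V → ℕ) : Prop :=
  Set.InjOn σ ↑S ∧ ∀ a b c : V, a ∈ S → b ∈ S → c ∈ S → a ≠ b → a ≠ c → b ≠ c →
    R {a, b, c} = b → BtwOrd σ a b c

theorem BetConsistentOn.mono (h : BetConsistentOn R S) (hTS : T ⊆ S) : BetConsistentOn R T :=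
  let ⟨σ, hinj, hσ⟩ := h
  ⟨σ, hinj.mono (Finset.coe_subset.2 hTS),
    fun a b c ha hb hc => hσ a b c (hTS ha) (hTS hb) (hTS hc)⟩

theorem IsConsistentOrder.of_lt_iff (hτ : IsConsistentOrder R S τ)
    (hlt : ∀ x ∈ S, ∀ y ∈ S, σ x < σ y ↔ τ x < τ y) : IsConsistentOrder R S σ := by
  refine ⟨fun a ha b hb hab => hτ.1 ha hb ?_, fun a b c ha hb hc hab hac hbc hR => ?_⟩
  · have := hlt a ha b hb
    have := hlt b hb a ha
    omega
  · have := hτ.2 a b c ha hb hc hab hac hbc hR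
    unfold BtwOrd at this ⊢
    rwa [hlt a ha b hb, hlt b hb c hc, hlt c hc b hb, hlt b hb a ha]

theorem IsConsistentOrder.chosen_between (hσ : IsConsistentOrder R S σ)
    (hx : x ∈ S) (hy : y ∈ S) (hz : z ∈ S) (hxy : x ≠ y) (hxz : x ≠ z) (hyz : y ≠ z)
    (hmem : R {x, y, z} ∈ ({x, y, z} : Finset V)) :
    R {x, y, z} = x ∧ BtwOrd σ y x z ∨ R {x, y, z} = y ∧ BtwOrd σ x y z ∨
      R {x, y, z} = z ∧ BtwOrd σ x z y := by
  simp only [Finset.mem_insert, Finset.mem_singleton] at hmem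
  rcases hmem with h | h | h
  · exact .inl ⟨h, hσ.2 y x z hy hx hz hxy.symm hyz hxz (by rwa [Finset.insert_comm])⟩
  · exact .inr (.inl ⟨h, hσ.2 x y z hx hy hz hxy hxz hyz h⟩)
  · exact .inr (.inr ⟨h, hσ.2 x z y hx hz hy hxz hxy hyz.symm (by rwa [Finset.pair_comm])⟩)

/-- Two consistent orderings either agree or disagree on all pairs of a triple. -/
theorem IsConsistentOrder.orientation_congr (hσ : IsConsistentOrder R S σ)
    (hτ : IsConsistentOrder R T τ) (hxS : x ∈ S) (hyS : y ∈ S) (hzS : z ∈ S)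
    (hxT : x ∈ T) (hyT : y ∈ T) (hzT : z ∈ T) (hxy : x ≠ y) (hxz : x ≠ z) (hyz : y ≠ z)
    (hmem : R {x, y, z} ∈ ({x, y, z} : Finset V)) :
    ((σ x < σ y ↔ τ x < τ y) ↔ (σ x < σ z ↔ τ x < τ z)) := by
  rcases hσ.chosen_between hxS hyS hzS hxy hxz hyz hmem with ⟨h, hb⟩ | ⟨h, hb⟩ | ⟨h, hb⟩ <;>
  rcases hτ.chosen_between hxT hyT hzT hxy hxz hyz hmem with ⟨h', hb'⟩ | ⟨h', hb'⟩ | ⟨h', hb'⟩ <;>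
    first | (unfold BtwOrd at hb hb'; omega) | grind

/-- `RightOfVia R σ v x y`: judging from the triplet on `{x, y, v}` and the orientation of `x, y`
in `σ`, the vertex `v` lies to the right of `x`: if `R` chooses `x`, then `v` and `y` lie on
opposite sides of `x`, and otherwise on the same side. -/
def RightOfVia (R : Finset V → V) (σ : V → ℕ) (v x y : V) : Prop :=
  (σ x < σ y ↔ R {x, y, v} ≠ x)

theorem IsConsistentOrder.rightOfVia_iff (hσ : IsConsistentOrder R S σ)
    (hx : x ∈ S) (hy : y ∈ S) (hv : v ∈ S) (hxy : x ≠ y) (hxv : x ≠ v) (hyv : y ≠ v)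
    (hmem : R {x, y, v} ∈ ({x, y, v} : Finset V)) :
    RightOfVia R σ v x y ↔ σ x < σ v := by
  unfold RightOfVia
  rcases hσ.chosen_between hx hy hv hxy hxv hyv hmem with ⟨h, hb⟩ | ⟨h, hb⟩ | ⟨h, hb⟩ <;>
    simp only [h, ne_eq, hxy.symm, hxv.symm, not_true_eq_false, not_false_eq_true, iff_true,
      iff_false] <;>
    unfold BtwOrd at hb <;> omega

theorem rightOfVia_congr (hσ : IsConsistentOrder R T σ) (hvT : v ∉ T)
    (hR : BetValid R (insert v T))
    (h4 : ∀ C ⊆ insert v T, C.card = 4 → BetConsistentOn R C)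
    (hx : x ∈ T) (hy : y ∈ T) (hz : z ∈ T) (hxy : x ≠ y) (hxz : x ≠ z) (hyz : y ≠ z) :
    RightOfVia R σ v x y ↔ RightOfVia R σ v x z := by
  have hne : ∀ {w}, w ∈ T → w ≠ v := fun hw h => hvT (h ▸ hw)
  have hvxyz : v ∉ ({x, y, z} : Finset V) := by
    simp only [Finset.mem_insert, Finset.mem_singleton, not_or]
    exact ⟨(hne hx).symm, (hne hy).symm, (hne hz).symm⟩
  have hC : (insert v {x, y, z} : Finset V).card = 4 := by
    rw [Finset.card_insert_of_notMem hvxyz, Finset.card_eq_three.2 ⟨x, y, z, hxy, hxz, hyz, rfl⟩]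
  have hCsub : (insert v {x, y, z} : Finset V) ⊆ insert v T :=
    Finset.insert_subset_insert v (by simp [Finset.insert_subset_iff, hx, hy, hz])
  obtain ⟨τ, hτ⟩ : ∃ τ, IsConsistentOrder R _ τ := h4 _ hCsub hC
  have hvalid : ∀ {a b c}, a ∈ T → b ∈ T → c ∈ insert v T → a ≠ b → a ≠ c → b ≠ c →
      R {a, b, c} ∈ ({a, b, c} : Finset V) := fun ha hb hc =>
    hR _ _ _ (Finset.mem_insert_of_mem ha) (Finset.mem_insert_of_mem hb) hc
  have horient := hσ.orientation_congr hτ hx hy hz (by simp) (by simp) (by simp) hxy hxz hyz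
    (hvalid hx hy (Finset.mem_insert_of_mem hz) hxy hxz hyz)
  have hy' := hτ.rightOfVia_iff (by simp) (by simp) (by simp) hxy (hne hx) (hne hy)
    (hvalid hx hy (Finset.mem_insert_self v T) hxy (hne hx) (hne hy))
  have hz' := hτ.rightOfVia_iff (by simp) (by simp) (by simp) hxz (hne hx) (hne hz)
    (hvalid hx hz (Finset.mem_insert_self v T) hxz (hne hx) (hne hz))
  unfold RightOfVia at hy' hz' ⊢
  grind

theorem exists_insert_at_cut (hvT : v ∉ T) (hσ : Set.InjOn σ ↑T) (p : V → Prop)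
    (hp : ∀ x ∈ T, ∀ y ∈ T, σ x < σ y → p y → p x) :
    ∃ σ' : V → ℕ, Set.InjOn σ' ↑(insert v T) ∧ (∀ x ∈ T, ∀ y ∈ T, σ' x < σ' y ↔ σ x < σ y) ∧
      ∀ x ∈ T, σ' x < σ' v ↔ p x := by
  classical
  set m := (T.filter p).sup (σ · + 1)
  have hne : ∀ {x}, x ∈ T → x ≠ v := fun hx h => hvT (h ▸ hx)
  have hm : ∀ x ∈ T, ¬p x → m ≤ σ x := fun x hx hpx => Finset.sup_le fun y hy => by
    obtain ⟨hyT, hpy⟩ := Finset.mem_filter.1 hy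
    have hxy : x ≠ y := fun h => hpx (h ▸ hpy)
    have : σ x ≠ σ y := hσ.ne hx hyT hxy
    have : ¬σ x < σ y := fun h => hpx (hp x hx y hyT h hpy)
    omega
  -- even values for `T`, the odd value `2 * m + 1` for `v`
  refine ⟨fun x => if x = v then 2 * m + 1 else 2 * σ x + 2, ?_, ?_, ?_⟩
  · intro a ha b hb hab
    simp only [Finset.coe_insert, Set.mem_insert_iff, Finset.mem_coe] at ha hb
    rcases ha with rfl | ha <;> rcases hb with rfl | hb
    · rfl
    · simp only [if_pos, if_neg (hne hb)] at hab; omega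
    · simp only [if_pos, if_neg (hne ha)] at hab; omega
    · simp only [if_neg (hne ha), if_neg (hne hb)] at hab
      exact hσ ha hb (by omega)
  · intro x hx y hy
    simp only [if_neg (hne hx), if_neg (hne hy)]
    omega
  · intro x hx
    simp only [if_neg (hne hx), if_pos]
    by_cases hpx : p x
    · have : σ x + 1 ≤ m := Finset.le_sup (f := (σ · + 1)) (Finset.mem_filter.2 ⟨hx, hpx⟩)
      simp only [hpx, iff_true]
      omega
    · have := hm x hx hpx
      simp only [hpx, iff_false]
      omega

theorem IsConsistentOrder.insert_of_rightOfVia_iff (hσ : IsConsistentOrder R T σ) (hvT : v ∉ T)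
    (hinj : Set.InjOn σ ↑(insert v T))
    (hside : ∀ x ∈ T, ∀ y ∈ T, x ≠ y → (RightOfVia R σ v x y ↔ σ x < σ v)) :
    IsConsistentOrder R (insert v T) σ := by
  have hne : ∀ {a b}, a ∈ insert v T → b ∈ insert v T → a ≠ b → σ a ≠ σ b :=
    fun ha hb => hinj.ne (Finset.mem_coe.2 ha) (Finset.mem_coe.2 hb)
  have hvT' := Finset.mem_insert_self v T
  have hT' : ∀ {a}, a ∈ T → a ∈ insert v T := Finset.mem_insert_of_mem
  have endpoint : ∀ b ∈ T, ∀ c ∈ T, b ≠ c → R {b, c, v} = b → BtwOrd σ v b c := by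
    intro b hb c hc hbc hR
    have h := hside b hb c hc hbc
    have := hne (hT' hb) hvT' (fun h => hvT (h ▸ hb))
    have := hne (hT' hb) (hT' hc) hbc
    simp only [RightOfVia, hR, ne_eq, not_true_eq_false, iff_false] at h
    unfold BtwOrd
    omega
  refine ⟨hinj, fun a b c ha hb hc hab hac hbc hR => ?_⟩
  rw [Finset.mem_insert] at ha hb hc
  rcases hb with rfl | hb
  · have ha := ha.resolve_left hab
    have hc := hc.resolve_left hbc.symm
    have hac' : R {a, c, b} = b := by rwa [Finset.pair_comm]
    have hca' : R {c, a, b} = b := by rwa [Finset.insert_comm, Finset.pair_comm]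
    have h1 := hside a ha c hc hac
    have h2 := hside c hc a ha hac.symm
    have := hne (hT' ha) (hT' hc) hac
    have := hne (hT' ha) hvT' hab
    have := hne (hT' hc) hvT' hbc.symm
    simp only [RightOfVia, hac', hca', ne_eq, hab.symm, hbc, not_false_eq_true, iff_true] at h1 h2
    unfold BtwOrd
    omega
  rcases ha with rfl | ha
  · exact endpoint b hb c (hc.resolve_left hac.symm) hbc
      (by rwa [Finset.pair_comm, Finset.insert_comm])
  rcases hc with rfl | hc
  · exact Or.symm (endpoint b hb a ha hab.symm (by rwa [Finset.insert_comm]))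
  exact hσ.2 a b c ha hb hc hab hac hbc hR

theorem IsConsistentOrder.betConsistentOn_insert (hσ : IsConsistentOrder R T σ) (hvT : v ∉ T)
    (hR : BetValid R (insert v T))
    (h4 : ∀ C ⊆ insert v T, C.card = 4 → BetConsistentOn R C) :
    BetConsistentOn R (insert v T) := by
  let p x := ∃ y ∈ T, y ≠ x ∧ RightOfVia R σ v x y
  have hp : ∀ x ∈ T, ∀ y ∈ T, y ≠ x → (p x ↔ RightOfVia R σ v x y) := by
    refine fun x hx y hy hyx => ⟨fun ⟨w, hw, hwx, h⟩ => ?_, fun h => ⟨y, hy, hyx, h⟩⟩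
    by_cases hwy : w = y
    · exact hwy ▸ h
    · exact (rightOfVia_congr hσ hvT hR h4 hx hw hy hwx.symm hyx.symm hwy).1 h
  have hcut : ∀ x ∈ T, ∀ y ∈ T, σ x < σ y → p y → p x := by
    intro x hx y hy hlt hpy
    have hxy : x ≠ y := ne_of_apply_ne σ hlt.ne
    have hyx : R {y, x, v} = y := by
      by_contra h
      exact (lt_asymm hlt) (((hp y hy x hx hxy).1 hpy).2 h)
    refine ⟨y, hy, hxy.symm, iff_of_true hlt ?_⟩
    rw [Finset.insert_comm, hyx]
    exact hxy.symm
  obtain ⟨σ', hinj, hlt, hside⟩ := exists_insert_at_cut hvT hσ.1 p hcut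
  refine ⟨σ', (hσ.of_lt_iff hlt).insert_of_rightOfVia_iff hvT hinj fun x hx y hy hxy => ?_⟩
  rw [hside x hx, hp x hx y hy hxy.symm]
  unfold RightOfVia
  rw [hlt x hx y hy]

theorem betConsistentOn_of_forall_card_eq_four (hR : BetValid R S)
    (h4 : ∀ C ⊆ S, C.card = 4 → BetConsistentOn R C) : BetConsistentOn R S := by
  induction S using Finset.induction_on with
  | empty => exact ⟨0, by simp, by simp⟩
  | insert v T hvT ih =>
    have hsub := Finset.subset_insert v T
    obtain ⟨σ, hσ⟩ : ∃ σ, IsConsistentOrder R T σ :=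
      ih (hR.mono hsub) fun C hC => h4 C (hC.trans hsub)
    exact hσ.betConsistentOn_insert hvT hR h4

end

/-- A dense betweenness instance is consistent if and only if it contains no
conflict on four vertices. -/
theorem betweenness_consistent_iff_no_conflict4 [Fintype V]
    (R : Finset V → V) (hval : BetValid R Finset.univ) :
    BetConsistentOn R Finset.univ ↔
      ∀ C : Finset V, C.card = 4 → BetConsistentOn R C :=
  ⟨fun h C _ => h.mono (Finset.subset_univ C),
    fun h4 => betConsistentOn_of_forall_card_eq_four hval fun C _ => h4 C⟩
end

section
/- Let B_σ = (V, R, σ) be an ordered dense betweenness instance and {a,b,c,d} ⊆ V a set of four vertices such that the triplet bca ∈ R (on {a,b,c}, choosing c) is the only triplet among the four triples of {a,b,c,d} inconsistent with σ. Then {a,b,c,d} is a conflict, i.e., no linear ordering makes all four triplets consistent. -/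
/-!
If an ordering `τ` were consistent with the instance on `{a, b, c, d}`, then on each of the
triples `abd`, `acd`, `bcd` both `σ` and `τ` put the vertex chosen by the instance in the middle.
On four points, betweenness on three of the four triples determines it on the fourth, so `σ`
would put `c` between `b` and `a`, as `τ` does.
-/

variable {V : Type*} [DecidableEq V]

def SharesMiddle (σ τ : V → ℕ) (x y z : V) : Prop :=
  (BtwOrd σ y x z ∧ BtwOrd τ y x z) ∨ (BtwOrd σ x y z ∧ BtwOrd τ x y z) ∨
    (BtwOrd σ x z y ∧ BtwOrd τ x z y)

/- The three triples cover all six pairs, so both orderings are injective on `{a, b, c, d}`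
without assuming it. -/
omit [DecidableEq V] in
theorem btwOrd_of_sharesMiddle {σ τ : V → ℕ} {a b c d : V}
    (habd : SharesMiddle σ τ a b d) (hacd : SharesMiddle σ τ a c d)
    (hbcd : SharesMiddle σ τ b c d) (h : BtwOrd τ b c a) : BtwOrd σ b c a := by
  unfold SharesMiddle BtwOrd at *
  rcases habd with ⟨u₁, v₁⟩ | ⟨u₁, v₁⟩ | ⟨u₁, v₁⟩ <;>
    rcases hacd with ⟨u₂, v₂⟩ | ⟨u₂, v₂⟩ | ⟨u₂, v₂⟩ <;>
    rcases hbcd with ⟨u₃, v₃⟩ | ⟨u₃, v₃⟩ | ⟨u₃, v₃⟩ <;>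
    omega

theorem sharesMiddle_of_consistent {R : Finset V → V} {S : Finset V} {σ τ : V → ℕ} {x y z : V}
    (hx : x ∈ S) (hy : y ∈ S) (hz : z ∈ S) (hxy : x ≠ y) (hxz : x ≠ z) (hyz : y ≠ z)
    (hR : R {x, y, z} ∈ ({x, y, z} : Finset V))
    (hσ : ∀ p q r : V, p ∈ S → q ∈ S → r ∈ S → p ≠ q → p ≠ r → q ≠ r →
      ({p, q, r} : Finset V) = {x, y, z} → R {p, q, r} = q → BtwOrd σ p q r)
    (hτ : ∀ p q r : V, p ∈ S → q ∈ S → r ∈ S → p ≠ q → p ≠ r → q ≠ r →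
      R {p, q, r} = q → BtwOrd τ p q r) :
    SharesMiddle σ τ x y z := by
  have hyxz : ({y, x, z} : Finset V) = {x, y, z} := Finset.insert_comm y x {z}
  have hxzy : ({x, z, y} : Finset V) = {x, y, z} := by rw [Finset.pair_comm z y]
  simp only [Finset.mem_insert, Finset.mem_singleton] at hR
  rcases hR with h | h | h
  · rw [← hyxz] at h
    exact Or.inl ⟨hσ y x z hy hx hz hxy.symm hyz hxz hyxz h, hτ y x z hy hx hz hxy.symm hyz hxz h⟩
  · exact Or.inr <| Or.inl ⟨hσ x y z hx hy hz hxy hxz hyz rfl h, hτ x y z hx hy hz hxy hxz hyz h⟩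
  · rw [← hxzy] at h
    exact Or.inr <| Or.inr
      ⟨hσ x z y hx hz hy hxz hxy hyz.symm hxzy h, hτ x z y hx hz hy hxz hxy hyz.symm h⟩

theorem bet_simple_conflict_general [Fintype V]
    (R : Finset V → V) (hval : BetValid R Finset.univ)
    (σ : V → ℕ)
    (a b c d : V) (hab : a ≠ b) (hac : a ≠ c) (had : a ≠ d)
    (hbc : b ≠ c) (hbd : b ≠ d) (hcd : c ≠ d)
    (hmid : R {a, b, c} = c)
    (hinc : ¬ BtwOrd σ b c a)
    (hothers : ∀ x y z : V, x ∈ ({a, b, c, d} : Finset V) →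
      y ∈ ({a, b, c, d} : Finset V) → z ∈ ({a, b, c, d} : Finset V) →
      x ≠ y → x ≠ z → y ≠ z → ({x, y, z} : Finset V) ≠ {a, b, c} →
      R {x, y, z} = y → BtwOrd σ x y z) :
    ¬ BetConsistentOn R {a, b, c, d} := by
  rintro ⟨τ, -, hτ⟩
  have hd : d ∉ ({a, b, c} : Finset V) := by simp [had.symm, hbd.symm, hcd.symm]
  have shares : ∀ x y : V, x ∈ ({a, b, c, d} : Finset V) → y ∈ ({a, b, c, d} : Finset V) →
      x ≠ y → x ≠ d → y ≠ d → SharesMiddle σ τ x y d := by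
    intro x y hx hy hxy hxd hyd
    refine sharesMiddle_of_consistent hx hy (by simp) hxy hxd hyd
      (hval x y d (by simp) (by simp) (by simp) hxy hxd hyd) ?_ hτ
    intro p q r hp hq hr hpq hpr hqr heq
    exact hothers p q r hp hq hr hpq hpr hqr fun h => hd (h ▸ heq ▸ by simp)
  have hτbca : BtwOrd τ b c a :=
    hτ b c a (by simp) (by simp) (by simp) hbc hab.symm hac.symm
      (by rwa [show ({b, c, a} : Finset V) = {a, b, c} by ext; simp; tauto])
  exact hinc (btwOrd_of_sharesMiddle (shares a b (by simp) (by simp) hab had hbd)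
    (shares a c (by simp) (by simp) hac had hcd) (shares b c (by simp) (by simp) hbc hbd hcd) hτbca)

/-- Let `B_σ` be an ordered dense betweenness instance and `{a, b, c, d}` a
set of four vertices such that the triplet `bca` (on `{a, b, c}`, choosing
`c`) is the only triplet among the four triples of `{a, b, c, d}`
inconsistent with `σ`. Then `{a, b, c, d}` is a conflict. -/
theorem bet_simple_conflict [Fintype V]
    (R : Finset V → V) (hval : BetValid R Finset.univ)
    (σ : V → ℕ) (hσ : Function.Injective σ)
    (a b c d : V) (hab : a ≠ b) (hac : a ≠ c) (had : a ≠ d)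
    (hbc : b ≠ c) (hbd : b ≠ d) (hcd : c ≠ d)
    (hmid : R {a, b, c} = c)
    (hinc : ¬ BtwOrd σ b c a)
    (hothers : ∀ x y z : V, x ∈ ({a, b, c, d} : Finset V) →
      y ∈ ({a, b, c, d} : Finset V) → z ∈ ({a, b, c, d} : Finset V) →
      x ≠ y → x ≠ z → y ≠ z → ({x, y, z} : Finset V) ≠ {a, b, c} →
      R {x, y, z} = y → BtwOrd σ x y z) :
    ¬ BetConsistentOn R {a, b, c, d} :=
  bet_simple_conflict_general R hval σ a b c d hab hac had hbc hbd hcd hmid hinc hothers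
end

section
/- In a dense betweenness instance, if S = {C_1, ..., C_m} with m > k is a sunflower of conflicts pairwise intersecting in exactly the triplet t, then every edition of at most k triplets making the instance consistent must edit t. -/
variable {V : Type*} [DecidableEq V]

/-- Sunflower lemma: if `C_1, …, C_m` with `m > k` are conflicts of a dense
betweenness instance pairwise intersecting in exactly the vertex set of a
triplet `t`, then every edition of at most `k` triplets making the instance
consistent must edit `t`. -/
theorem bet_sunflower [Fintype V]
    (R : Finset V → V) (hval : BetValid R Finset.univ)
    (k m : ℕ) (hm : k < m)
    (t : Finset V) (ht : t.card = 3)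
    (C : Fin m → Finset V)
    (hconf : ∀ i, ¬ BetConsistentOn R (C i))
    (hsub : ∀ i, t ⊆ C i)
    (hpair : ∀ i j, i ≠ j → C i ∩ C j = t)
    (R' : Finset V → V) (hval' : BetValid R' Finset.univ)
    (hcons' : BetConsistentOn R' Finset.univ)
    (hsize : ((Finset.powersetCard 3 (Finset.univ : Finset V)).filter
      (fun s => R s ≠ R' s)).card ≤ k) :
    R' t ≠ R t := by
  intro heq
  set F := ((Finset.powersetCard 3 (Finset.univ : Finset V)).filter
      (fun s => R s ≠ R' s)) with hF
  -- each conflict contains an edited triple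
  have hex : ∀ i : Fin m, ∃ s ∈ F, s ⊆ C i := by
    intro i
    by_contra hno
    push_neg at hno
    apply hconf i
    obtain ⟨σ, hinj, hσ⟩ := hcons'
    refine ⟨σ, hinj.mono (by simp), ?_⟩
    intro a b c ha hb hc hab hac hbc hR
    have hsubC : ({a, b, c} : Finset V) ⊆ C i := by
      intro x hx
      simp only [Finset.mem_insert, Finset.mem_singleton] at hx
      rcases hx with rfl | rfl | rfl <;> assumption
    have hcard : ({a, b, c} : Finset V).card = 3 := by
      rw [Finset.card_insert_of_notMem (by simp [hab, hac]),
        Finset.card_insert_of_notMem (by simp [hbc])]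
      rfl
    have hmem : ({a, b, c} : Finset V) ∈ Finset.powersetCard 3 (Finset.univ : Finset V) := by
      simp [Finset.mem_powersetCard, hcard]
    have : R {a, b, c} = R' {a, b, c} := by
      by_contra hne
      exact hno {a, b, c} (Finset.mem_filter.mpr ⟨hmem, hne⟩) hsubC
    exact hσ a b c (Finset.mem_univ a) (Finset.mem_univ b) (Finset.mem_univ c)
      hab hac hbc (this ▸ hR)
  choose s hsF hsC using hex
  have hinj : Function.Injective s := by
    intro i j hij
    by_contra hne
    have hst : s i ⊆ t := by
      rw [← hpair i j hne]
      exact Finset.subset_inter (hsC i) (hij ▸ hsC j)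
    have hcard : (s i).card = 3 := by
      have := (Finset.mem_filter.mp (hsF i)).1
      exact (Finset.mem_powersetCard.mp this).2
    have : s i = t := Finset.eq_of_subset_of_card_le hst (by omega)
    have hne' := (Finset.mem_filter.mp (hsF i)).2
    exact hne' (this ▸ heq.symm)
  have : m ≤ F.card := by
    have := Finset.card_le_card_of_injOn s (fun i _ => hsF i)
      (fun i _ j _ h => hinj h) (s := Finset.univ)
    simpa using this
  omega
end

section
/- If a dense betweenness instance B = (V, R) admits an edition of at most k triplets, then any conflict packing C (maximal sequence of 4-vertex conflicts where each new conflict either shares at most two vertices with previous ones or has a unique new vertex which is a seed) satisfies |C| ≤ k and |V(C)| ≤ 4k. -/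
variable {V : Type*} [DecidableEq V]

/-- A vertex `x` of a conflict `C = {x, b, c, d}` is a seed if `C` remains a
conflict for every possible choice of the triplet on `C \ {x}`. -/
def BetSeed (R : Finset V → V) (x : V) (C : Finset V) : Prop :=
  x ∈ C ∧ ∀ y ∈ C.erase x,
    ¬ BetConsistentOn (Function.update R (C.erase x) y) C

lemma betCons_eqOn {R R' : Finset V → V} {S : Finset V}
    (h : ∀ a b c : V, a ∈ S → b ∈ S → c ∈ S → a ≠ b → a ≠ c → b ≠ c →
      R {a, b, c} = R' {a, b, c})
    (h' : BetConsistentOn R' S) : BetConsistentOn R S := by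
  obtain ⟨σ, hinj, hσ⟩ := h'
  exact ⟨σ, hinj, fun a b c ha hb hc hab hac hbc hR =>
    hσ a b c ha hb hc hab hac hbc ((h a b c ha hb hc hab hac hbc).symm.trans hR)⟩

lemma betCons_mono {R : Finset V → V} {S T : Finset V} (hST : S ⊆ T)
    (h : BetConsistentOn R T) : BetConsistentOn R S := by
  obtain ⟨σ, hinj, hσ⟩ := h
  exact ⟨σ, hinj.mono (Finset.coe_subset.mpr hST), fun a b c ha hb hc =>
    hσ a b c (hST ha) (hST hb) (hST hc)⟩

/-- If a dense betweenness instance admits an edition of at most `k`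
triplets, then any conflict packing `C = (C_1, …, C_l)` — each `C_i` a
4-vertex conflict, each `C_i` (for `i > 1`) either sharing at most two
vertices with the union of the previous conflicts, or having exactly one new
vertex which is a seed — satisfies `l ≤ k` and `|V(C)| ≤ 4k`. -/
theorem bet_conflict_packing_bound [Fintype V]
    (R : Finset V → V) (hval : BetValid R Finset.univ) (k : ℕ)
    (hedit : ∃ R' : Finset V → V, BetValid R' Finset.univ ∧
      BetConsistentOn R' Finset.univ ∧
      ((Finset.powersetCard 3 (Finset.univ : Finset V)).filter
        (fun s => R s ≠ R' s)).card ≤ k)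
    (l : ℕ) (C : Fin l → Finset V)
    (hC4 : ∀ i, (C i).card = 4)
    (hCconf : ∀ i, ¬ BetConsistentOn R (C i))
    (hstep : ∀ i : Fin l, 0 < (i : ℕ) →
      ((C i ∩ (Finset.univ.filter (fun j => j < i)).biUnion C).card ≤ 2 ∨
       ∃ x, C i \ (Finset.univ.filter (fun j => j < i)).biUnion C = {x} ∧
         BetSeed R x (C i))) :
    l ≤ k ∧ ((Finset.univ : Finset (Fin l)).biUnion C).card ≤ 4 * k := by
  obtain ⟨R', hval', hcons', hek⟩ := hedit
  set E : Finset (Finset V) :=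
    (Finset.powersetCard 3 (Finset.univ : Finset V)).filter (fun s => R s ≠ R' s) with hE
  set prevU : Fin l → Finset V :=
    fun i => (Finset.univ.filter (fun j => j < i)).biUnion C with hprevU
  -- a generic edited triple inside any conflict
  have hext : ∀ i : Fin l, ∃ a b c : V, a ∈ C i ∧ b ∈ C i ∧ c ∈ C i ∧
      a ≠ b ∧ a ≠ c ∧ b ≠ c ∧ R {a, b, c} ≠ R' {a, b, c} := by
    intro i
    by_contra h
    push_neg at h
    exact hCconf i (betCons_eqOn
      (fun a b c ha hb hc hab hac hbc => h a b c ha hb hc hab hac hbc)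
      (betCons_mono (Finset.subset_univ _) hcons'))
  have key : ∀ i : Fin l, ∃ s : Finset V, s ⊆ C i ∧ s ∈ E ∧ ¬ s ⊆ prevU i := by
    intro i
    rcases Nat.eq_zero_or_pos (i : ℕ) with h0 | hpos
    · -- first conflict: prevU i = ∅
      obtain ⟨a, b, c, ha, hb, hc, hab, hac, hbc, hne⟩ := hext i
      have hsub : ({a, b, c} : Finset V) ⊆ C i := by
        intro z hz; simp only [Finset.mem_insert, Finset.mem_singleton] at hz
        rcases hz with rfl | rfl | rfl <;> assumption
      have hcard : ({a, b, c} : Finset V).card = 3 :=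
        Finset.card_eq_three.mpr ⟨a, b, c, hab, hac, hbc, rfl⟩
      refine ⟨{a, b, c}, hsub, ?_, ?_⟩
      · exact Finset.mem_filter.mpr ⟨Finset.mem_powersetCard.mpr
          ⟨Finset.subset_univ _, hcard⟩, hne⟩
      · have hempty : prevU i = ∅ := by
          have : (Finset.univ.filter (fun j => j < i) : Finset (Fin l)) = ∅ := by
            apply Finset.filter_eq_empty_iff.mpr
            intro j _ hj
            exact absurd (Fin.lt_def.mp hj) (by omega)
          simp [hprevU, this]
        intro hsubE
        rw [hempty] at hsubE
        have : ({a, b, c} : Finset V) = ∅ := Finset.subset_empty.mp hsubE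
        simp [this] at hcard
    · rcases hstep i hpos with hsmall | ⟨x, hx, hseed⟩
      · obtain ⟨a, b, c, ha, hb, hc, hab, hac, hbc, hne⟩ := hext i
        have hsub : ({a, b, c} : Finset V) ⊆ C i := by
          intro z hz; simp only [Finset.mem_insert, Finset.mem_singleton] at hz
          rcases hz with rfl | rfl | rfl <;> assumption
        have hcard : ({a, b, c} : Finset V).card = 3 :=
          Finset.card_eq_three.mpr ⟨a, b, c, hab, hac, hbc, rfl⟩
        refine ⟨{a, b, c}, hsub, Finset.mem_filter.mpr ⟨Finset.mem_powersetCard.mpr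
          ⟨Finset.subset_univ _, hcard⟩, hne⟩, ?_⟩
        intro hsubP
        have : ({a, b, c} : Finset V) ⊆ C i ∩ prevU i := Finset.subset_inter hsub hsubP
        have h2 : (C i ∩ prevU i).card ≤ 2 := hsmall
        have := Finset.card_le_card this
        rw [hcard] at this
        omega
      · -- seed case
        have hx' : C i \ prevU i = {x} := hx
        have hxmem : x ∈ C i \ prevU i := by rw [hx']; exact Finset.mem_singleton_self x
        have hxC : x ∈ C i := (Finset.mem_sdiff.mp hxmem).1
        have hxnp : x ∉ prevU i := (Finset.mem_sdiff.mp hxmem).2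
        -- an edited triple containing x must exist
        have hx3 : ∃ s : Finset V, s ⊆ C i ∧ s.card = 3 ∧ x ∈ s ∧ R s ≠ R' s := by
          by_contra h
          push_neg at h
          set D := (C i).erase x with hD
          have hD3 : D.card = 3 := by
            rw [hD, Finset.card_erase_of_mem hxC, hC4 i]
          have hyD : R' D ∈ D := by
            obtain ⟨a, b, c, hab, hac, hbc, hDeq⟩ := Finset.card_eq_three.mp hD3
            rw [hDeq]
            exact hval' a b c (Finset.mem_univ a) (Finset.mem_univ b)
              (Finset.mem_univ c) hab hac hbc
          apply hseed.2 (R' D) hyD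
          apply betCons_eqOn (R' := R') ?_ (betCons_mono (Finset.subset_univ _) hcons')
          intro a b c ha hb hc hab hac hbc
          have hsub : ({a, b, c} : Finset V) ⊆ C i := by
            intro z hz; simp only [Finset.mem_insert, Finset.mem_singleton] at hz
            rcases hz with rfl | rfl | rfl <;> assumption
          have hcard : ({a, b, c} : Finset V).card = 3 :=
            Finset.card_eq_three.mpr ⟨a, b, c, hab, hac, hbc, rfl⟩
          by_cases hDeq : ({a, b, c} : Finset V) = D
          · rw [hDeq, Function.update_self]
          · rw [Function.update_of_ne hDeq]
            have hxin : x ∈ ({a, b, c} : Finset V) := by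
              by_contra hxn
              apply hDeq
              have hsubD : ({a, b, c} : Finset V) ⊆ D := fun z hz =>
                Finset.mem_erase.mpr ⟨fun hzx => hxn (hzx ▸ hz), hsub hz⟩
              exact Finset.eq_of_subset_of_card_le hsubD (by omega)
            exact h {a, b, c} hsub hcard hxin
        obtain ⟨s, hs1, hs2, hs3, hs4⟩ := hx3
        refine ⟨s, hs1, Finset.mem_filter.mpr ⟨Finset.mem_powersetCard.mpr
          ⟨Finset.subset_univ _, hs2⟩, hs4⟩, fun hsubP => hxnp (hsubP hs3)⟩
  choose f hf1 hf2 hf3 using key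
  have hinj : Set.InjOn f ↑(Finset.univ : Finset (Fin l)) := by
    intro i _ j _ hij
    by_contra hne
    rcases lt_or_gt_of_ne hne with hlt | hlt
    · apply hf3 j
      rw [← hij]
      exact (hf1 i).trans (Finset.subset_biUnion_of_mem C
        (Finset.mem_filter.mpr ⟨Finset.mem_univ i, hlt⟩))
    · apply hf3 i
      rw [hij]
      exact (hf1 j).trans (Finset.subset_biUnion_of_mem C
        (Finset.mem_filter.mpr ⟨Finset.mem_univ j, hlt⟩))
  have hlk : l ≤ k := by
    have := Finset.card_le_card_of_injOn f (fun i _ => hf2 i) hinj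
    simpa using this.trans hek
  refine ⟨hlk, ?_⟩
  calc ((Finset.univ : Finset (Fin l)).biUnion C).card
      ≤ ∑ i : Fin l, (C i).card := Finset.card_biUnion_le
    _ = 4 * l := by simp [hC4, Finset.sum_const, mul_comm]
    _ ≤ 4 * k := by omega
end

section
/- Let B = (V, R) be a dense betweenness instance, G ⊆ V such that R[G ∪ S] is consistent for all S ⊆ V \ G with |S| ≤ 2, each a ∈ V \ G having its locus (u,w), a pair of consecutive vertices of the consistent ordering σ of R[G]. For consecutive vertices u, w, define on B_uw = {a : locus(a) = (u,w)} the relation a <_uw b iff abw ∈ R. If additionally no 4-subset {a,b,c,w} with a,b,c ∈ B_uw and w ∈ G forms a conflict with w as a seed, then <_uw is a strict total order (asymmetric, transitive, and total). -/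
variable {V : Type*} [DecidableEq V]

/-- Let `B = (V, R)` be a dense betweenness instance, `G ⊆ V` such that
`R[G ∪ S]` is consistent for all `S ⊆ V \ G` with `|S| ≤ 2`, `σ` the
consistent ordering of `R[G]`, and `u, w` consecutive vertices of `σ` in `G`.
Let `B_uw` be a set of vertices of `V \ G` whose locus is `(u, w)`. If
moreover no 4-subset `{a, b, c, w}` with `a, b, c ∈ B_uw` forms a conflict
with `w` as a seed, then the relation `a <_uw b ↔ abw ∈ R` is a strict total
order on `B_uw`: asymmetric, transitive and total. -/
theorem bet_locus_strict_total_order [Fintype V]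
    (R : Finset V → V) (hval : BetValid R Finset.univ)
    (G : Finset V)
    (hcons : ∀ S : Finset V, S ⊆ Finset.univ \ G → S.card ≤ 2 →
      BetConsistentOn R (G ∪ S))
    (σ : V → ℕ) (hσinj : Set.InjOn σ ↑G)
    (hσcons : ∀ a b c : V, a ∈ G → b ∈ G → c ∈ G → a ≠ b → a ≠ c → b ≠ c →
      R {a, b, c} = b → BtwOrd σ a b c)
    (u w : V) (hu : u ∈ G) (hw : w ∈ G) (huw : σ u < σ w)
    (hconsec : ∀ g ∈ G, ¬ (σ u < σ g ∧ σ g < σ w))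
    (B : Finset V) (hBG : B ⊆ Finset.univ \ G)
    (hloc : ∀ a ∈ B, ∃ τ : V → ℕ, Set.InjOn τ (↑G ∪ {a}) ∧
      (∀ g ∈ G, ∀ g' ∈ G, (σ g < σ g' ↔ τ g < τ g')) ∧
      τ u < τ a ∧ τ a < τ w ∧
      (∀ x y z : V, x ∈ insert a G → y ∈ insert a G → z ∈ insert a G →
        x ≠ y → x ≠ z → y ≠ z → R {x, y, z} = y → BtwOrd τ x y z))
    (hseed : ∀ a ∈ B, ∀ b ∈ B, ∀ c ∈ B, a ≠ b → a ≠ c → b ≠ c →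
      ¬ (BetSeed R w {a, b, c, w} ∧ ¬ BetConsistentOn R {a, b, c, w})) :
    (∀ a ∈ B, ∀ b ∈ B, a ≠ b → ¬ (R {a, b, w} = b ∧ R {a, b, w} = a)) ∧
    (∀ a ∈ B, ∀ b ∈ B, ∀ c ∈ B, a ≠ b → a ≠ c → b ≠ c →
      R {a, b, w} = b → R {b, c, w} = c → R {a, c, w} = c) ∧
    (∀ a ∈ B, ∀ b ∈ B, a ≠ b → R {a, b, w} = b ∨ R {a, b, w} = a) := by
  have hne : ∀ a ∈ B, a ∉ G := fun a ha => (Finset.mem_sdiff.mp (hBG ha)).2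
  have huw' : u ≠ w := by rintro rfl; exact lt_irrefl _ huw
  -- Each a ∈ B satisfies R {u, a, w} = a (a is between u and w).
  have hRu : ∀ a ∈ B, R {u, a, w} = a := by
    intro a ha
    have hau : a ≠ u := fun h => hne a ha (h ▸ hu)
    have haw : a ≠ w := fun h => hne a ha (h ▸ hw)
    obtain ⟨τ, _, _, hua, haw2, hτ⟩ := hloc a ha
    have hmem := hval u a w (Finset.mem_univ _) (Finset.mem_univ _) (Finset.mem_univ _)
      (Ne.symm hau) huw' haw
    have hu' : u ∈ insert a G := Finset.mem_insert_of_mem hu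
    have hw' : w ∈ insert a G := Finset.mem_insert_of_mem hw
    have ha' : a ∈ insert a G := Finset.mem_insert_self a G
    simp only [Finset.mem_insert, Finset.mem_singleton] at hmem
    rcases hmem with h | h | h
    · have e : ({u, a, w} : Finset V) = {a, u, w} := by ext x; simp; tauto
      have hb := hτ a u w ha' hu' hw' hau haw huw' (by rw [← e]; exact h)
      unfold BtwOrd at hb; omega
    · exact h
    · have e : ({u, a, w} : Finset V) = {u, w, a} := by ext x; simp; tauto
      have hb := hτ u w a hu' hw' ha' huw' (Ne.symm hau) (Ne.symm haw)
        (by rw [← e]; exact h)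
      unfold BtwOrd at hb; omega
  -- For distinct a b ∈ B, R {a, b, w} ≠ w.
  have key : ∀ a ∈ B, ∀ b ∈ B, a ≠ b → R {a, b, w} ≠ w := by
    intro a ha b hb hab hRw
    have haw : a ≠ w := fun h => hne a ha (h ▸ hw)
    have hbw : b ≠ w := fun h => hne b hb (h ▸ hw)
    have hau : a ≠ u := fun h => hne a ha (h ▸ hu)
    have hbu : b ≠ u := fun h => hne b hb (h ▸ hu)
    obtain ⟨τ, _, hτ⟩ := hcons {a, b}
      (by
        intro x hx
        simp only [Finset.mem_insert, Finset.mem_singleton] at hx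
        rcases hx with rfl | rfl
        · exact hBG ha
        · exact hBG hb)
      (Finset.card_insert_le _ _ |>.trans (by simp))
    have hu' : u ∈ G ∪ {a, b} := Finset.mem_union_left _ hu
    have hw' : w ∈ G ∪ {a, b} := Finset.mem_union_left _ hw
    have ha' : a ∈ G ∪ {a, b} := Finset.mem_union_right _ (by simp)
    have hb' : b ∈ G ∪ {a, b} := Finset.mem_union_right _ (by simp)
    have h1 : BtwOrd τ u a w := hτ u a w hu' ha' hw' (Ne.symm hau) huw' haw (hRu a ha)
    have h2 : BtwOrd τ u b w := hτ u b w hu' hb' hw' (Ne.symm hbu) huw' hbw (hRu b hb)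
    have e : ({a, b, w} : Finset V) = {a, w, b} := by ext x; simp; tauto
    have h3 : BtwOrd τ a w b := hτ a w b ha' hw' hb' haw hab (Ne.symm hbw)
      (by rw [← e]; exact hRw)
    unfold BtwOrd at h1 h2 h3; omega
  refine ⟨?_, ?_, ?_⟩
  · rintro a ha b hb hab ⟨h1, h2⟩
    exact hab (h2.symm.trans h1)
  · intro a ha b hb c hc hab hac hbc h1 h2
    have haw : a ≠ w := fun h => hne a ha (h ▸ hw)
    have hbw : b ≠ w := fun h => hne b hb (h ▸ hw)
    have hcw : c ≠ w := fun h => hne c hc (h ▸ hw)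
    have hmem := hval a c w (Finset.mem_univ _) (Finset.mem_univ _) (Finset.mem_univ _)
      hac haw hcw
    simp only [Finset.mem_insert, Finset.mem_singleton] at hmem
    rcases hmem with h3 | h3 | h3
    · -- R {a, c, w} = a : cyclic conflict, contradict hseed
      exfalso
      set C : Finset V := {a, b, c, w} with hC
      have hCer : C.erase w = {a, b, c} := by
        ext x
        simp only [hC, Finset.mem_erase, Finset.mem_insert, Finset.mem_singleton]
        constructor
        · rintro ⟨hxw, rfl | rfl | rfl | rfl⟩ <;> tauto
        · rintro (rfl | rfl | rfl) <;> exact ⟨by assumption, by tauto⟩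
      have ha' : a ∈ C := by simp [hC]
      have hb' : b ∈ C := by simp [hC]
      have hc' : c ∈ C := by simp [hC]
      have hw' : w ∈ C := by simp [hC]
      have e3 : ({c, a, w} : Finset V) = {a, c, w} := by ext x; simp; tauto
      -- Core inconsistency: any R' agreeing with R on the three triplets
      -- containing w makes C inconsistent.
      have core : ∀ R' : Finset V → V, R' {a, b, w} = b → R' {b, c, w} = c →
          R' {a, c, w} = a → ¬ BetConsistentOn R' C := by
        rintro R' k1 k2 k3 ⟨τ, _, hτ⟩
        have t1 : BtwOrd τ a b w := hτ a b w ha' hb' hw' hab haw hbw k1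
        have t2 : BtwOrd τ b c w := hτ b c w hb' hc' hw' hbc hbw hcw k2
        have t3 : BtwOrd τ c a w := hτ c a w hc' ha' hw' (Ne.symm hac) hcw haw
          (by rw [e3]; exact k3)
        unfold BtwOrd at t1 t2 t3; omega
      have hnotw : ({a, b, c} : Finset V) ≠ {a, b, w} ∧
          ({a, b, c} : Finset V) ≠ {b, c, w} ∧ ({a, b, c} : Finset V) ≠ {a, c, w} := by
        refine ⟨?_, ?_, ?_⟩ <;>
          · intro h
            have : w ∈ ({a, b, c} : Finset V) := by rw [h]; simp
            simp only [Finset.mem_insert, Finset.mem_singleton] at this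
            rcases this with h' | h' | h' <;> simp_all
      have hseedC : BetSeed R w C := by
        refine ⟨hw', ?_⟩
        intro y hy
        rw [hCer]
        apply core
        · rw [Function.update_of_ne (Ne.symm hnotw.1)]; exact h1
        · rw [Function.update_of_ne (Ne.symm hnotw.2.1)]; exact h2
        · rw [Function.update_of_ne (Ne.symm hnotw.2.2)]; exact h3
      exact hseed a ha b hb c hc hab hac hbc ⟨hseedC, core R h1 h2 h3⟩
    · exact h3
    · exact absurd h3 (key a ha c hc hac)
  · intro a ha b hb hab
    have haw : a ≠ w := fun h => hne a ha (h ▸ hw)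
    have hbw : b ≠ w := fun h => hne b hb (h ▸ hw)
    have hmem := hval a b w (Finset.mem_univ _) (Finset.mem_univ _) (Finset.mem_univ _)
      hab haw hbw
    simp only [Finset.mem_insert, Finset.mem_singleton] at hmem
    rcases hmem with h | h | h
    · exact Or.inr h
    · exact Or.inl h
    · exact absurd h (key a ha b hb hab)
end
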